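/- arXiv:2104.11853 — 4 statements merged into one kernel-verified Lean document; each statement's English description precedes it below -/
import Mathlib

section
/- (Key identity (4.9).) Assume u = 0 on ∂E, let φ = φ(z) ∈ C¹([0,1]) be a function of z only, and let ρ ∈ C¹(closure of E) satisfy κ_z = ρ κ_θ on E. Then (F₂₂, φρ u_z)_E − (F₃₃, φ u_z)_E + (2ρ F₂₃^sym, φ u_θ)_E = ∫_E [φ A_{θ,z} ρ + (1/2) ∂_z(φ A_θ)] u_z² dθdz − ∫_E [(1/2) ∂_z(A_θ φ ρ) + A_{θ,z} φ ρ] u_θ² dθdz − ∫_E [∂_θ(φ A_z ρ) + (1+ρ) φ A_{z,θ}] u_θ u_z dθdz. -/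
open MeasureTheory Set Real

noncomputable section

/-- Partial derivative in `θ` of a scalar function on the parameter plane `(θ, z)`. -/
def dTh (f : ℝ × ℝ → ℝ) (p : ℝ × ℝ) : ℝ := fderiv ℝ f p (1, 0)

/-- Partial derivative in `z` of a scalar function on the parameter plane `(θ, z)`. -/
def dZ (f : ℝ × ℝ → ℝ) (p : ℝ × ℝ) : ℝ := fderiv ℝ f p (0, 1)

/-- The two-dimensional data: the functions `z1, z2` determining the parameter domain `E`,
the metric coefficients `Ath = A_θ`, `Az = A_z`, the principal curvatures `kth = κ_θ`,
`kz = κ_z`, and the components `ut = u_t`, `uth = u_θ`, `uz = u_z` of a displacement. -/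
structure Setup2D where
  z1 : ℝ → ℝ
  z2 : ℝ → ℝ
  Ath : ℝ × ℝ → ℝ
  Az : ℝ × ℝ → ℝ
  kth : ℝ × ℝ → ℝ
  kz : ℝ × ℝ → ℝ
  ut : ℝ × ℝ → ℝ
  uth : ℝ × ℝ → ℝ
  uz : ℝ × ℝ → ℝ

namespace Setup2D

/-- The parameter domain `E = {(θ,z) : θ ∈ (0,1), z ∈ (z1 θ, z2 θ)}`. -/
def E (S : Setup2D) : Set (ℝ × ℝ) :=
  {p | p.1 ∈ Ioo (0 : ℝ) 1 ∧ p.2 ∈ Ioo (S.z1 p.1) (S.z2 p.1)}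

/-- The entry `F₂₂` of the simplified gradient. -/
def F22 (S : Setup2D) (p : ℝ × ℝ) : ℝ :=
  (S.Az p * dTh S.uth p + S.Az p * S.Ath p * S.kth p * S.ut p + dZ S.Ath p * S.uz p) /
    (S.Az p * S.Ath p)

/-- The entry `F₂₃` of the simplified gradient. -/
def F23 (S : Setup2D) (p : ℝ × ℝ) : ℝ :=
  (S.Ath p * dZ S.uth p - dTh S.Az p * S.uz p) / (S.Az p * S.Ath p)

/-- The entry `F₃₂` of the simplified gradient. -/
def F32 (S : Setup2D) (p : ℝ × ℝ) : ℝ :=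
  (S.Az p * dTh S.uz p - dZ S.Ath p * S.uth p) / (S.Az p * S.Ath p)

/-- The entry `F₃₃` of the simplified gradient. -/
def F33 (S : Setup2D) (p : ℝ × ℝ) : ℝ :=
  (S.Ath p * dZ S.uz p + S.Az p * S.Ath p * S.kz p * S.ut p + dTh S.Az p * S.uth p) /
    (S.Az p * S.Ath p)

/-- `F₂₃^sym = (F₂₃ + F₃₂)/2`. -/
def F23sym (S : Setup2D) (p : ℝ × ℝ) : ℝ := (S.F23 p + S.F32 p) / 2

/-- `|F^sym|² = F₂₂² + 2 (F₂₃^sym)² + F₃₃²`. -/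
def FsymSq (S : Setup2D) (p : ℝ × ℝ) : ℝ := S.F22 p ^ 2 + 2 * S.F23sym p ^ 2 + S.F33 p ^ 2

/-- The weighted inner product `(f, g)_E = ∫_E A_θ A_z f g dθ dz`. -/
def ip (S : Setup2D) (f g : ℝ × ℝ → ℝ) : ℝ := ∫ p in S.E, S.Ath p * S.Az p * f p * g p

/-- The weighted squared norm `‖f‖²_E`. -/
def nsq (S : Setup2D) (f : ℝ × ℝ → ℝ) : ℝ := S.ip f f

/-- The weighted squared norm `‖|F^sym|‖²_E` of the simplified symmetrized gradient. -/
def nF (S : Setup2D) : ℝ := ∫ p in S.E, S.Ath p * S.Az p * S.FsymSq p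

/-- The standing context: the form of the domain, the regularity `A_θ, A_z, κ_θ, κ_z ∈ C¹`,
positivity of `A_θ, A_z` on the closure of `E`, and `u ∈ C¹`. -/
def Base (S : Setup2D) : Prop :=
  (∀ θ ∈ Icc (0 : ℝ) 1, 0 ≤ S.z1 θ ∧ S.z1 θ < S.z2 θ ∧ S.z2 θ ≤ 1) ∧
  ContDiff ℝ 1 S.Ath ∧ ContDiff ℝ 1 S.Az ∧ ContDiff ℝ 1 S.kth ∧ ContDiff ℝ 1 S.kz ∧
  (∀ p ∈ closure S.E, 0 < S.Ath p ∧ 0 < S.Az p) ∧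
  ContDiff ℝ 1 S.ut ∧ ContDiff ℝ 1 S.uth ∧ ContDiff ℝ 1 S.uz

/-- The boundary condition `u = 0` on `∂E`. -/
def BZero (S : Setup2D) : Prop := ∀ p ∈ frontier S.E, S.ut p = 0 ∧ S.uth p = 0 ∧ S.uz p = 0

/-- The additional `C²` regularity of `A_θ, A_z` and `u`. -/
def Csq (S : Setup2D) : Prop :=
  ContDiff ℝ 2 S.Ath ∧ ContDiff ℝ 2 S.Az ∧
  ContDiff ℝ 2 S.ut ∧ ContDiff ℝ 2 S.uth ∧ ContDiff ℝ 2 S.uz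

/-- The Codazzi–Gauss identity `∂_z(A_{θ,z}/A_z) + ∂_θ(A_{z,θ}/A_θ) = -A_z A_θ κ_z κ_θ`. -/
def CodazziGauss (S : Setup2D) : Prop :=
  ∀ p ∈ S.E,
    dZ (fun q => dZ S.Ath q / S.Az q) p + dTh (fun q => dTh S.Az q / S.Ath q) p =
      -(S.Az p * S.Ath p * S.kz p * S.kth p)

/-- The uniform bounds `a ≤ A_θ, A_z ≤ A` and `|∇A_θ| + |∇A_z| ≤ B` on the closure of `E`. -/
def Bounds (S : Setup2D) (a A B : ℝ) : Prop :=
  ∀ p ∈ closure S.E, a ≤ S.Ath p ∧ S.Ath p ≤ A ∧ a ≤ S.Az p ∧ S.Az p ≤ A ∧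
    ‖fderiv ℝ S.Ath p‖ + ‖fderiv ℝ S.Az p‖ ≤ B

/-- `ρ` satisfies `κ_z = ρ κ_θ` with `ρ₀ ≤ ρ ≤ ρ₁` and `|∇ρ| ≤ c2`. -/
def RhoHyp (S : Setup2D) (ρ : ℝ × ℝ → ℝ) (ρ0 ρ1 c2 : ℝ) : Prop :=
  ContDiff ℝ 1 ρ ∧ (∀ p ∈ S.E, S.kz p = ρ p * S.kth p) ∧
  (∀ p ∈ closure S.E, ρ0 ≤ ρ p ∧ ρ p ≤ ρ1 ∧ ‖fderiv ℝ ρ p‖ ≤ c2)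

/-- Nonnegativity of the curvatures and the comparability condition
`(1/c)√(κ_θ κ_z) ≤ κ_θ, κ_z ≤ c √(κ_θ κ_z)` on `E`. -/
def Comparable (S : Setup2D) (c : ℝ) : Prop :=
  ∀ p ∈ S.E, 0 ≤ S.kth p ∧ 0 ≤ S.kz p ∧
    c⁻¹ * Real.sqrt (S.kth p * S.kz p) ≤ S.kth p ∧
    S.kth p ≤ c * Real.sqrt (S.kth p * S.kz p) ∧
    c⁻¹ * Real.sqrt (S.kth p * S.kz p) ≤ S.kz p ∧
    S.kz p ≤ c * Real.sqrt (S.kth p * S.kz p)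

end Setup2D

/-!
Pointwise on `E`, the left-hand integrand minus the right-hand one is the divergence
`∂_θ(φ ρ A_z u_θ u_z) + ½ ∂_z(φ ρ A_θ u_θ² - φ A_θ u_z²)`; the `u_t` terms cancel because
`κ_z = ρ κ_θ`. Both fluxes vanish on `∂E`, and a `C¹` function vanishing on the frontier of a
bounded set has derivative integrating to zero over it along every coordinate line: extended by
zero, it is continuous and differentiable off the countably many boundary points where its
derivative does not vanish (these are isolated zeros), so the fundamental theorem of calculus
applies. Nothing is assumed of `z₁, z₂`, so `E` may fail to be measurable; the integrals are
therefore first moved to the interior of `E`, which is harmless since every integrand vanishes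
on `∂E`.
-/

open Filter Topology

lemma integrableOn_of_isBounded_of_continuousAt {X E : Type*} [MetricSpace X] [ProperSpace X]
    [MeasurableSpace X] [OpensMeasurableSpace X] {μ : Measure X} [IsFiniteMeasureOnCompacts μ]
    [NormedAddCommGroup E] {s : Set X} (hsb : Bornology.IsBounded s) {f : X → E}
    (hf : ∀ x ∈ closure s, ContinuousAt f x) : IntegrableOn f s μ :=
  ((continuousOn_of_forall_continuousAt hf).integrableOn_compact hsb.isCompact_closure).mono_set
    subset_closure

lemma setIntegral_eq_setIntegral_interior {X E : Type*} [TopologicalSpace X] [MeasurableSpace X]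
    [OpensMeasurableSpace X] {μ : Measure X} [NormedAddCommGroup E] [NormedSpace ℝ E]
    {s : Set X} {f : X → E} (hf : ∀ x ∈ frontier s, f x = 0) :
    ∫ x in s, f x ∂μ = ∫ x in interior s, f x ∂μ := by
  rw [← setIntegral_eq_of_subset_of_forall_sdiff_eq_zero isClosed_closure.measurableSet
      subset_closure fun x hx => hf x ⟨hx.1, fun h => hx.2 (interior_subset h)⟩,
    setIntegral_eq_of_subset_of_forall_sdiff_eq_zero isClosed_closure.measurableSet
      (interior_subset.trans subset_closure) hf]

lemma countable_setOf_eq_zero_and_deriv_ne_zero {f f' : ℝ → ℝ}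
    (hf : ∀ x, HasDerivAt f (f' x) x) : {x | f x = 0 ∧ f' x ≠ 0}.Countable := by
  refine (countable_setOfPred_isolated_right_within (s := f ⁻¹' {0})).mono ?_
  rintro x ⟨hx, hx'⟩
  refine ⟨hx, ?_⟩
  have hne : ∀ᶠ y in 𝓝[≠] x, f y ≠ 0 := (hf x).eventually_ne hx'
  rw [← eventually_false_iff_eq_bot]
  have hle : 𝓝[f ⁻¹' {0} ∩ Ioi x] x ≤ 𝓝[≠] x := nhdsWithin_mono _ fun y hy => hy.2.ne'
  filter_upwards [hle hne, self_mem_nhdsWithin] with y hy hy' using hy hy'.1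

lemma HasDerivAt.indicator {s : Set ℝ} {f f' : ℝ → ℝ} {x : ℝ} (hf : HasDerivAt f (f' x) x)
    (hx : x ∈ frontier s → f x = 0 ∧ f' x = 0) :
    HasDerivAt (s.indicator f) (s.indicator f' x) x := by
  by_cases hxs : x ∈ frontier s
  · obtain ⟨hfx, hf'x⟩ := hx hxs
    -- `|1_s f| ≤ |f|` and `f(y) = o(y - x)`
    rw [hf'x, hasDerivAt_iff_isLittleO] at hf
    rw [Set.indicator_apply_eq_zero.2 fun _ => hf'x, hasDerivAt_iff_isLittleO,
      Set.indicator_apply_eq_zero.2 fun _ => hfx]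
    simp only [hfx, smul_zero, sub_zero] at hf ⊢
    exact (Asymptotics.isBigO_of_le _ fun y => norm_indicator_le_norm_self f y).trans_isLittleO hf
  · rw [← Set.mem_compl_iff, compl_frontier_eq_union_interior] at hxs
    rcases hxs with hxi | hxe
    · rw [Set.indicator_of_mem (interior_subset hxi)]
      exact hf.congr_of_eventuallyEq <| eventuallyEq_iff_exists_mem.mpr
        ⟨interior s, isOpen_interior.mem_nhds hxi, Set.eqOn_indicator.mono interior_subset⟩
    · rw [Set.indicator_of_notMem (interior_subset hxe)]
      exact (hasDerivAt_const x 0).congr_of_eventuallyEq <| eventuallyEq_iff_exists_mem.mpr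
        ⟨interior sᶜ, isOpen_interior.mem_nhds hxe,
          fun y hy => Set.indicator_of_notMem (interior_subset hy) f⟩

lemma setIntegral_deriv_eq_zero_of_frontier {s : Set ℝ} (hs : MeasurableSet s)
    (hsb : Bornology.IsBounded s) {f f' : ℝ → ℝ} (hf : ∀ x, HasDerivAt f (f' x) x)
    (hf' : Continuous f') (h0 : ∀ x ∈ frontier s, f x = 0) :
    ∫ x in s, f' x = 0 := by
  obtain ⟨r, hr, hsr⟩ := hsb.subset_ball_lt 0 0
  rw [Real.ball_eq_Ioo, zero_sub, zero_add] at hsr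
  have hFTC := integral_eq_of_hasDerivAt_off_countable_of_le (s.indicator f) (s.indicator f')
    (neg_le_self hr.le) (countable_setOf_eq_zero_and_deriv_ne_zero hf)
    (Continuous.indicator h0
      (continuous_iff_continuousAt.2 fun x => (hf x).continuousAt)).continuousOn
    (fun x hx => (hf x).indicator fun hxs => ⟨h0 x hxs, not_not.1 fun h => hx.2 ⟨h0 x hxs, h⟩⟩)
    (hf'.integrableOn_uIcc.indicator hs).intervalIntegrable
  rwa [Set.indicator_of_notMem (fun h => (hsr h).1.false),
    Set.indicator_of_notMem (fun h => (hsr h).2.false), sub_zero,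
    intervalIntegral.integral_of_le (neg_le_self hr.le), integral_Ioc_eq_integral_Ioo,
    setIntegral_indicator hs, Set.inter_eq_right.2 hsr] at hFTC

section PartialDerivatives

variable {g h : ℝ × ℝ → ℝ} {p : ℝ × ℝ}

@[fun_prop]
lemma continuous_dZ (hg : ContDiff ℝ 1 g) : Continuous (dZ g) :=
  (hg.continuous_fderiv one_ne_zero).clm_apply continuous_const

@[fun_prop]
lemma continuous_dTh (hg : ContDiff ℝ 1 g) : Continuous (dTh g) :=
  (hg.continuous_fderiv one_ne_zero).clm_apply continuous_const

lemma hasDerivAt_dZ (hg : DifferentiableAt ℝ g p) :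
    HasDerivAt (fun z => g (p.1, z)) (dZ g p) p.2 :=
  hg.hasFDerivAt.comp_hasDerivAt p.2 ((hasDerivAt_const p.2 p.1).prodMk (hasDerivAt_id p.2))

lemma hasDerivAt_dTh (hg : DifferentiableAt ℝ g p) :
    HasDerivAt (fun t => g (t, p.2)) (dTh g p) p.1 :=
  hg.hasFDerivAt.comp_hasDerivAt p.1 ((hasDerivAt_id p.1).prodMk (hasDerivAt_const p.1 p.2))

lemma dZ_mul (hg : DifferentiableAt ℝ g p) (hh : DifferentiableAt ℝ h p) :
    dZ (fun q => g q * h q) p = dZ g p * h p + g p * dZ h p := by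
  simp [dZ, fderiv_fun_mul hg hh]; ring

lemma dTh_mul (hg : DifferentiableAt ℝ g p) (hh : DifferentiableAt ℝ h p) :
    dTh (fun q => g q * h q) p = dTh g p * h p + g p * dTh h p := by
  simp [dTh, fderiv_fun_mul hg hh]; ring

lemma dZ_sub (hg : DifferentiableAt ℝ g p) (hh : DifferentiableAt ℝ h p) :
    dZ (fun q => g q - h q) p = dZ g p - dZ h p := by
  simp [dZ, fderiv_fun_sub hg hh]

lemma dZ_comp_snd {φ : ℝ → ℝ} (hφ : DifferentiableAt ℝ φ p.2) :
    dZ (fun q => φ q.2) p = deriv φ p.2 := by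
  simp [dZ, fderiv_fun_comp p hφ differentiableAt_snd, fderiv_snd]

lemma dTh_comp_snd {φ : ℝ → ℝ} (hφ : DifferentiableAt ℝ φ p.2) :
    dTh (fun q => φ q.2) p = 0 := by
  simp [dTh, fderiv_fun_comp p hφ differentiableAt_snd, fderiv_snd]

end PartialDerivatives

section Divergence

variable {s : Set (ℝ × ℝ)} {g : ℝ × ℝ → ℝ}

lemma setIntegral_dZ_eq_zero_of_frontier (hs : MeasurableSet s) (hsb : Bornology.IsBounded s)
    (hg : ContDiff ℝ 1 g) (h0 : ∀ p ∈ frontier s, g p = 0) :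
    ∫ p in s, dZ g p = 0 := by
  have hint := (integrableOn_of_isBounded_of_continuousAt (μ := volume) hsb
    fun p _ => (continuous_dZ hg).continuousAt).integrable_indicator hs
  rw [← integral_indicator hs, Measure.volume_eq_prod, integral_prod _ hint]
  refine integral_eq_zero_of_ae (Eventually.of_forall fun x => ?_)
  have hmk : Continuous (fun y : ℝ => (x, y)) := by fun_prop
  change ∫ y, ((fun y => (x, y)) ⁻¹' s).indicator (dZ g ∘ fun y => (x, y)) y = 0
  rw [integral_indicator (measurable_prodMk_left hs)]
  exact setIntegral_deriv_eq_zero_of_frontier (measurable_prodMk_left hs)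
    (hsb.image_snd.subset fun y hy => ⟨(x, y), hy, rfl⟩)
    (fun y => hasDerivAt_dZ (p := (x, y)) (hg.differentiable one_ne_zero _))
    ((continuous_dZ hg).comp hmk) fun y hy => h0 _ (hmk.frontier_preimage_subset s hy)

lemma setIntegral_dTh_eq_zero_of_frontier (hs : MeasurableSet s) (hsb : Bornology.IsBounded s)
    (hg : ContDiff ℝ 1 g) (h0 : ∀ p ∈ frontier s, g p = 0) :
    ∫ p in s, dTh g p = 0 := by
  have hint := (integrableOn_of_isBounded_of_continuousAt (μ := volume) hsb
    fun p _ => (continuous_dTh hg).continuousAt).integrable_indicator hs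
  rw [← integral_indicator hs, Measure.volume_eq_prod, integral_prod_symm _ hint]
  refine integral_eq_zero_of_ae (Eventually.of_forall fun y => ?_)
  have hmk : Continuous (fun x : ℝ => (x, y)) := by fun_prop
  change ∫ x, ((fun x => (x, y)) ⁻¹' s).indicator (dTh g ∘ fun x => (x, y)) x = 0
  rw [integral_indicator (measurable_prodMk_right hs)]
  exact setIntegral_deriv_eq_zero_of_frontier (measurable_prodMk_right hs)
    (hsb.image_fst.subset fun x hx => ⟨(x, y), hx, rfl⟩)
    (fun x => hasDerivAt_dTh (p := (x, y)) (hg.differentiable one_ne_zero _))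
    ((continuous_dTh hg).comp hmk) fun x hx => h0 _ (hmk.frontier_preimage_subset s hx)

end Divergence

namespace Setup2D

variable (S : Setup2D)

lemma isBounded_E (hS : S.Base) : Bornology.IsBounded S.E := by
  refine ((Metric.isBounded_Icc (0 : ℝ) 1).prod (Metric.isBounded_Icc (0 : ℝ) 1)).subset ?_
  rintro ⟨θ, z⟩ ⟨hθ, hz⟩
  obtain ⟨h1, -, h2⟩ := hS.1 θ (Ioo_subset_Icc_self hθ)
  exact ⟨Ioo_subset_Icc_self hθ, h1.trans hz.1.le, hz.2.le.trans h2⟩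

lemma continuousAt_F22_F33_F23sym (hS : S.Base) {p : ℝ × ℝ} (hp : p ∈ closure S.E) :
    ContinuousAt S.F22 p ∧ ContinuousAt S.F33 p ∧ ContinuousAt S.F23sym p := by
  obtain ⟨-, hAth, hAz, hkth, hkz, hpos, hut, huth, huz⟩ := hS
  have hne : S.Az p * S.Ath p ≠ 0 := mul_ne_zero (hpos p hp).2.ne' (hpos p hp).1.ne'
  refine ⟨?_, ?_, ?_⟩
  · unfold F22; fun_prop (maxTransitionDepth := 2) (disch := exact hne)
  · unfold F33; fun_prop (maxTransitionDepth := 2) (disch := exact hne)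
  · unfold F23sym F23 F32; fun_prop (maxTransitionDepth := 2) (disch := exact hne)

def fluxTh (φ : ℝ → ℝ) (ρ : ℝ × ℝ → ℝ) : ℝ × ℝ → ℝ := fun q =>
  φ q.2 * ρ q * S.Az q * S.uth q * S.uz q

def fluxZ (φ : ℝ → ℝ) (ρ : ℝ × ℝ → ℝ) : ℝ × ℝ → ℝ := fun q =>
  φ q.2 * ρ q * S.Ath q * S.uth q * S.uth q - φ q.2 * S.Ath q * S.uz q * S.uz q

lemma integrand_sub_eq_divergence {φ : ℝ → ℝ} {ρ : ℝ × ℝ → ℝ} {p : ℝ × ℝ}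
    (hAth : DifferentiableAt ℝ S.Ath p) (hAz : DifferentiableAt ℝ S.Az p)
    (huth : DifferentiableAt ℝ S.uth p) (huz : DifferentiableAt ℝ S.uz p)
    (hφ : DifferentiableAt ℝ φ p.2) (hρ : DifferentiableAt ℝ ρ p)
    (hAth0 : S.Ath p ≠ 0) (hAz0 : S.Az p ≠ 0) (hρκ : S.kz p = ρ p * S.kth p) :
    S.Ath p * S.Az p * S.F22 p * (φ p.2 * ρ p * S.uz p)
        - S.Ath p * S.Az p * S.F33 p * (φ p.2 * S.uz p)
        + S.Ath p * S.Az p * (2 * ρ p * S.F23sym p) * (φ p.2 * S.uth p)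
      - ((φ p.2 * dZ S.Ath p * ρ p + 1 / 2 * dZ (fun q => φ q.2 * S.Ath q) p) * S.uz p ^ 2
        - (1 / 2 * dZ (fun q => S.Ath q * φ q.2 * ρ q) p + dZ S.Ath p * φ p.2 * ρ p) *
            S.uth p ^ 2
        - (dTh (fun q => φ q.2 * S.Az q * ρ q) p + (1 + ρ p) * φ p.2 * dTh S.Az p) *
            (S.uth p * S.uz p))
    = dTh (S.fluxTh φ ρ) p + 1 / 2 * dZ (S.fluxZ φ ρ) p := by
  have hφ' : DifferentiableAt ℝ (fun q : ℝ × ℝ => φ q.2) p := hφ.comp p differentiableAt_snd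
  unfold fluxTh fluxZ
  simp (disch := fun_prop) only [dZ_sub, dZ_mul, dTh_mul, dZ_comp_snd, dTh_comp_snd]
  simp only [F22, F33, F23sym, F23, F32, hρκ]
  field_simp
  ring

lemma setIntegral_interior_divergence_eq_zero (hS : S.Base) (hB0 : S.BZero) {φ : ℝ → ℝ}
    (hφ : ContDiff ℝ 1 φ) {ρ : ℝ × ℝ → ℝ} (hρ : ContDiff ℝ 1 ρ) :
    ∫ p in interior S.E, (dTh (S.fluxTh φ ρ) p + 1 / 2 * dZ (S.fluxZ φ ρ) p) = 0 := by
  have hb := (S.isBounded_E hS).subset (interior_subset (s := S.E))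
  obtain ⟨-, hAth, hAz, -, -, -, -, huth, huz⟩ := hS
  have hFth : ContDiff ℝ 1 (S.fluxTh φ ρ) := by unfold fluxTh; fun_prop
  have hFz : ContDiff ℝ 1 (S.fluxZ φ ρ) := by unfold fluxZ; fun_prop
  have hu0 : ∀ p ∈ frontier (interior S.E), S.uth p = 0 ∧ S.uz p = 0 :=
    fun p hp => (hB0 p (frontier_interior_subset hp)).2
  rw [integral_add, integral_const_mul,
    setIntegral_dTh_eq_zero_of_frontier measurableSet_interior hb hFth fun p hp => by
      simp [fluxTh, (hu0 p hp).1],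
    setIntegral_dZ_eq_zero_of_frontier measurableSet_interior hb hFz fun p hp => by
      simp [fluxZ, (hu0 p hp).1, (hu0 p hp).2], mul_zero, add_zero]
  all_goals exact integrableOn_of_isBounded_of_continuousAt hb fun p _ => by fun_prop

end Setup2D

theorem key_identity (S : Setup2D) (hBase : S.Base) (hB0 : S.BZero)
    (φ : ℝ → ℝ) (hφ : ContDiff ℝ 1 φ)
    (ρ : ℝ × ℝ → ℝ) (hρ : ContDiff ℝ 1 ρ) (hρκ : ∀ p ∈ S.E, S.kz p = ρ p * S.kth p) :
    S.ip S.F22 (fun p => φ p.2 * ρ p * S.uz p) - S.ip S.F33 (fun p => φ p.2 * S.uz p) +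
        S.ip (fun p => 2 * ρ p * S.F23sym p) (fun p => φ p.2 * S.uth p) =
      (∫ p in S.E,
        (φ p.2 * dZ S.Ath p * ρ p + (1 / 2) * dZ (fun q => φ q.2 * S.Ath q) p) * S.uz p ^ 2) -
      (∫ p in S.E,
        ((1 / 2) * dZ (fun q => S.Ath q * φ q.2 * ρ q) p + dZ S.Ath p * φ p.2 * ρ p) *
          S.uth p ^ 2) -
      (∫ p in S.E,
        (dTh (fun q => φ q.2 * S.Az q * ρ q) p + (1 + ρ p) * φ p.2 * dTh S.Az p) *
          (S.uth p * S.uz p)) := by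
  have ⟨_, hAth, hAz, _, _, hpos, _, huth, huz⟩ := hBase
  simp only [Setup2D.ip]
  rw [← sub_eq_zero, ← integral_sub, ← integral_add, ← integral_sub, ← integral_sub,
    ← integral_sub]
  · rw [setIntegral_eq_setIntegral_interior fun p hp => by simp [(hB0 p hp).2.1, (hB0 p hp).2.2],
      setIntegral_congr_fun measurableSet_interior fun p hp =>
        S.integrand_sub_eq_divergence (hAth.differentiable one_ne_zero p)
          (hAz.differentiable one_ne_zero p) (huth.differentiable one_ne_zero p)
          (huz.differentiable one_ne_zero p) (hφ.differentiable one_ne_zero p.2)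
          (hρ.differentiable one_ne_zero p) (hpos p (interior_subset_closure hp)).1.ne'
          (hpos p (interior_subset_closure hp)).2.ne' (hρκ p (interior_subset hp))]
    exact S.setIntegral_interior_divergence_eq_zero hBase hB0 hφ hρ
  all_goals
    refine integrableOn_of_isBounded_of_continuousAt (S.isBounded_E hBase) fun p hp => ?_
    obtain ⟨h22, h33, h23⟩ := S.continuousAt_F22_F33_F23sym hBase hp
    fun_prop (maxTransitionDepth := 2)
end
end

section
/- (Integration-by-parts identity (4.12).) Assume additionally A_θ, A_z ∈ C²(closure of E), u ∈ C²(closure of E; ℝ³), and u = 0 on ∂E. Then, noting 2F₂₃^sym − F₂₃ = F₃₂, one has (F₂₃, F₃₂)_E = ∫_E u_{θ,z} u_{z,θ} dθdz + ∫_E (A_{θ,z} A_{z,θ}/(A_θ A_z)) u_θ u_z dθdz + (1/2) ∫_E ∂_z(A_{θ,z}/A_z) u_θ² dθdz + (1/2) ∫_E ∂_θ(A_{z,θ}/A_θ) u_z² dθdz. -/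
open MeasureTheory Set Real

noncomputable section

/-!
Expanding the product, `A_θ A_z F₂₃ F₃₂` is `u_{θ,z} u_{z,θ} + (A_{θ,z} A_{z,θ}/(A_θ A_z)) u_θ u_z`
minus the cross terms `h₁ u_θ u_{θ,z} + h₂ u_z u_{z,θ}`, where `h₁ = A_{θ,z}/A_z` and
`h₂ = A_{z,θ}/A_θ`. By the product rule `h₁ u_θ u_{θ,z} = ½ ∂_z(h₁ u_θ²) - ½ (∂_z h₁) u_θ²`, and
similarly for the second cross term, so it remains to see that `∫_E ∂_z(h₁ u_θ²) = 0` and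
`∫_E ∂_θ(h₂ u_z²) = 0`. No regularity of `∂E` is needed for this: `G = h u²` vanishes together
with its derivative on `∂E` because `u` does, so the extension of `G` by zero outside `closure E`
is differentiable on the whole plane and compactly supported, and the integral of a directional
derivative of such a function vanishes. As the derivative of `G` also vanishes on
`closure E \ E ⊆ ∂E`, integrating over `E` or over `closure E` is the same, although `E` itself
need not be measurable.
-/

open Asymptotics in
theorem hasFDerivAt_indicator_of_frontier {E F : Type*} [NormedAddCommGroup E] [NormedSpace ℝ E]
    [NormedAddCommGroup F] [NormedSpace ℝ F] {K : Set E} {G : E → F} (hK : IsClosed K)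
    (hG : ∀ p ∈ K, DifferentiableAt ℝ G p)
    (hfr : ∀ p ∈ frontier K, G p = 0 ∧ fderiv ℝ G p = 0) (p : E) :
    HasFDerivAt (K.indicator G) (K.indicator (fderiv ℝ G) p) p := by
  by_cases hpK : p ∈ K
  swap
  · rw [indicator_of_notMem hpK]
    refine (hasFDerivAt_const 0 p).congr_of_eventuallyEq ?_
    filter_upwards [hK.isOpen_compl.mem_nhds hpK] with q hq using indicator_of_notMem hq G
  rw [indicator_of_mem hpK]
  by_cases hpi : p ∈ interior K
  · refine (hG p hpK).hasFDerivAt.congr_of_eventuallyEq ?_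
    filter_upwards [isOpen_interior.mem_nhds hpi] with q hq
      using indicator_of_mem (interior_subset hq) G
  obtain ⟨hG0, hD0⟩ := hfr p ⟨subset_closure hpK, hpi⟩
  have hGp := (hG p hpK).hasFDerivAt
  rw [hD0, hasFDerivAt_iff_isLittleO_nhds_zero] at hGp ⊢
  refine IsBigO.trans_isLittleO (isBigO_of_le _ fun h => ?_) hGp
  simp only [indicator_of_mem hpK, hG0, sub_zero, zero_apply]
  by_cases hq : p + h ∈ K <;> simp [hq]

theorem setIntegral_fderiv_eq_zero_of_frontier {E F : Type*} [NormedAddCommGroup E]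
    [NormedSpace ℝ E] [FiniteDimensional ℝ E] [MeasurableSpace E] [BorelSpace E]
    [NormedAddCommGroup F] [NormedSpace ℝ F]
    (μ : Measure E) [μ.IsAddHaarMeasure] {s V : Set E} {G : E → F}
    (hs : Bornology.IsBounded s) (hV : IsOpen V) (hsV : closure s ⊆ V)
    (hG : ContDiffOn ℝ 1 G V) (hfr : ∀ p ∈ frontier s, G p = 0 ∧ fderiv ℝ G p = 0) (v : E) :
    ∫ p in s, fderiv ℝ G p v ∂μ = 0 := by
  set K := closure s
  have hK : IsCompact K := hs.isCompact_closure
  have hGd : ∀ p ∈ V, DifferentiableAt ℝ G p := fun p hp =>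
    (hG.differentiableOn one_ne_zero).differentiableAt (hV.mem_nhds hp)
  have hDc : ContinuousOn (fderiv ℝ G) K :=
    (hG.continuousOn_fderiv_of_isOpen hV le_rfl).mono hsV
  have hsK : ∀ p ∈ K \ s, fderiv ℝ G p v = 0 := fun p hp => by
    rw [(hfr p ⟨hp.1, fun hi => hp.2 (interior_subset hi)⟩).2, zero_apply]
  have hDv : (fun p => K.indicator (fderiv ℝ G) p v) = K.indicator (fun p => fderiv ℝ G p v) :=
    (indicator_comp_of_zero (g := fun (L : E →L[ℝ] F) => L v) (zero_apply v)).symm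
  rw [← setIntegral_eq_of_subset_of_forall_sdiff_eq_zero isClosed_closure.measurableSet
    subset_closure hsK, ← integral_indicator isClosed_closure.measurableSet, ← hDv]
  simpa using integral_bilinear_hasFDerivAt_right_eq_neg_left_of_integrable (μ := μ)
    (B := ContinuousLinearMap.lsmul ℝ ℝ) (v := v) (f := fun _ => (1 : ℝ)) (f' := fun _ => 0)
    (g := K.indicator G) (g' := K.indicator (fderiv ℝ G)) (by simp)
    (by simpa [hDv] using (integrable_indicator_iff isClosed_closure.measurableSet).2
          ((hDc.clm_apply continuousOn_const).integrableOn_compact hK))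
    (by simpa using (integrable_indicator_iff isClosed_closure.measurableSet).2
          ((hG.continuousOn.mono hsV).integrableOn_compact hK))
    (fun p _ => hasFDerivAt_const 1 p)
    (fun p _ => hasFDerivAt_indicator_of_frontier isClosed_closure (fun q hq => hGd q (hsV hq))
      (fun q hq => hfr q (frontier_closure_subset hq)) p)

theorem fderiv_mul_sq {E : Type*} [NormedAddCommGroup E] [NormedSpace ℝ E] {h u : E → ℝ} {p : E}
    (hh : DifferentiableAt ℝ h p) (hu : DifferentiableAt ℝ u p) :
    fderiv ℝ (fun q => h q * u q ^ 2) p =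
      u p ^ 2 • fderiv ℝ h p + (2 * h p * u p) • fderiv ℝ u p := by
  rw [(hh.hasFDerivAt.fun_mul (hu.hasFDerivAt.pow 2)).fderiv]
  ext v
  simp only [add_apply, smul_apply, smul_eq_mul, nsmul_eq_mul]
  ring

theorem setIntegral_fderiv_mul_sq_eq_zero {E : Type*} [NormedAddCommGroup E]
    [NormedSpace ℝ E] [FiniteDimensional ℝ E] [MeasurableSpace E] [BorelSpace E]
    (μ : Measure E) [μ.IsAddHaarMeasure] {s V : Set E} {h u : E → ℝ}
    (hs : Bornology.IsBounded s) (hV : IsOpen V) (hsV : closure s ⊆ V)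
    (hh : ContDiffOn ℝ 1 h V) (hu : ContDiffOn ℝ 1 u V) (hu0 : ∀ p ∈ frontier s, u p = 0)
    (v : E) : ∫ p in s, fderiv ℝ (fun q => h q * u q ^ 2) p v ∂μ = 0 := by
  refine setIntegral_fderiv_eq_zero_of_frontier μ hs hV hsV (hh.mul (hu.pow 2)) (fun p hp => ?_) v
  have hpV : p ∈ V := hsV (frontier_subset_closure hp)
  have hd {f : E → ℝ} (hf : ContDiffOn ℝ 1 f V) : DifferentiableAt ℝ f p :=
    (hf.differentiableOn one_ne_zero).differentiableAt (hV.mem_nhds hpV)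
  simp [fderiv_mul_sq (hd hh) (hd hu), hu0 p hp]

theorem ContDiff.contDiffOn_fderiv_apply_div {E : Type*} [NormedAddCommGroup E]
    [NormedSpace ℝ E] {f g : E → ℝ} (hf : ContDiff ℝ 2 f) (hg : ContDiff ℝ 1 g) (v : E) :
    ContDiffOn ℝ 1 (fun q => fderiv ℝ f q v / g q) {p | g p ≠ 0} :=
  ((hf.fderiv_right (by norm_num)).clm_apply contDiff_const).contDiffOn.div hg.contDiffOn
    fun _ hp => hp

namespace Setup2D

theorem isBounded_E_s8 (S : Setup2D) (hz : ∀ θ ∈ Ioo (0 : ℝ) 1, 0 ≤ S.z1 θ ∧ S.z2 θ ≤ 1) :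
    Bornology.IsBounded S.E := by
  refine (Metric.isBounded_Icc ((0 : ℝ), (0 : ℝ)) (1, 1)).subset ?_
  rintro ⟨θ, z⟩ ⟨hθ, hz1, hz2⟩
  exact ⟨⟨hθ.1.le, (hz θ hθ).1.trans hz1.le⟩, ⟨hθ.2.le, hz2.le.trans (hz θ hθ).2⟩⟩

theorem Ath_mul_Az_mul_F23_mul_F32 (S : Setup2D) {p : ℝ × ℝ} (hA : S.Ath p ≠ 0)
    (hB : S.Az p ≠ 0) (hq1 : DifferentiableAt ℝ (fun q => dZ S.Ath q / S.Az q) p)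
    (hq2 : DifferentiableAt ℝ (fun q => dTh S.Az q / S.Ath q) p)
    (hu1 : DifferentiableAt ℝ S.uth p) (hu2 : DifferentiableAt ℝ S.uz p) :
    S.Ath p * S.Az p * S.F23 p * S.F32 p =
      dZ S.uth p * dTh S.uz p +
      dZ S.Ath p * dTh S.Az p / (S.Ath p * S.Az p) * (S.uth p * S.uz p) +
      1 / 2 * (dZ (fun q => dZ S.Ath q / S.Az q) p * S.uth p ^ 2) +
      1 / 2 * (dTh (fun q => dTh S.Az q / S.Ath q) p * S.uz p ^ 2) -
      1 / 2 * (dZ (fun q => dZ S.Ath q / S.Az q * S.uth q ^ 2) p +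
        dTh (fun q => dTh S.Az q / S.Ath q * S.uz q ^ 2) p) := by
  have e1 : dZ (fun q => dZ S.Ath q / S.Az q * S.uth q ^ 2) p =
      S.uth p ^ 2 * dZ (fun q => dZ S.Ath q / S.Az q) p +
        2 * (dZ S.Ath p / S.Az p) * S.uth p * dZ S.uth p := by
    rw [dZ, fderiv_mul_sq hq1 hu1]; rfl
  have e2 : dTh (fun q => dTh S.Az q / S.Ath q * S.uz q ^ 2) p =
      S.uz p ^ 2 * dTh (fun q => dTh S.Az q / S.Ath q) p +
        2 * (dTh S.Az p / S.Ath p) * S.uz p * dTh S.uz p := by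
    rw [dTh, fderiv_mul_sq hq2 hu2]; rfl
  rw [e1, e2, F23, F32]
  field_simp
  ring

theorem ip_F23_F32_eq_sub_divergence (S : Setup2D) {V : Set (ℝ × ℝ)} (hV : IsOpen V)
    (hAV : ∀ p ∈ V, S.Ath p ≠ 0 ∧ S.Az p ≠ 0) (hE : Bornology.IsBounded S.E)
    (hEV : closure S.E ⊆ V) (hq1 : ContDiffOn ℝ 1 (fun q => dZ S.Ath q / S.Az q) V)
    (hq2 : ContDiffOn ℝ 1 (fun q => dTh S.Az q / S.Ath q) V)
    (hu1 : ContDiffOn ℝ 1 S.uth V) (hu2 : ContDiffOn ℝ 1 S.uz V) :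
    S.ip S.F23 S.F32 =
      (∫ p in S.E, dZ S.uth p * dTh S.uz p) +
      (∫ p in S.E, dZ S.Ath p * dTh S.Az p / (S.Ath p * S.Az p) * (S.uth p * S.uz p)) +
      1 / 2 * (∫ p in S.E, dZ (fun q => dZ S.Ath q / S.Az q) p * S.uth p ^ 2) +
      1 / 2 * (∫ p in S.E, dTh (fun q => dTh S.Az q / S.Ath q) p * S.uz p ^ 2) -
      1 / 2 * ((∫ p in S.E, dZ (fun q => dZ S.Ath q / S.Az q * S.uth q ^ 2) p) +
        ∫ p in S.E, dTh (fun q => dTh S.Az q / S.Ath q * S.uz q ^ 2) p) := by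
  have hpt : ∀ p ∈ V, S.Ath p * S.Az p * S.F23 p * S.F32 p = _ := fun p hp => by
    have hd {f : ℝ × ℝ → ℝ} (hf : ContDiffOn ℝ 1 f V) : DifferentiableAt ℝ f p :=
      (hf.differentiableOn one_ne_zero).differentiableAt (hV.mem_nhds hp)
    exact S.Ath_mul_Az_mul_F23_mul_F32 (hAV p hp).1 (hAV p hp).2 (hd hq1) (hd hq2) (hd hu1) (hd hu2)
  have hint {f : ℝ × ℝ → ℝ} (hf : ContinuousOn f V) : Integrable f (volume.restrict S.E) :=
    ((hf.mono hEV).integrableOn_compact hE.isCompact_closure).mono_set subset_closure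
  have hcd {g : ℝ × ℝ → ℝ} (hg : ContDiffOn ℝ 1 g V) (v : ℝ × ℝ) :
      ContinuousOn (fun p => fderiv ℝ g p v) V :=
    (hg.continuousOn_fderiv_of_isOpen hV le_rfl).clm_apply continuousOn_const
  -- continuity facts for the `fun_prop` calls below
  have cu1 := hu1.continuousOn
  have cu2 := hu2.continuousOn
  have c1 : ContinuousOn (dZ S.uth) V := hcd hu1 _
  have c2 : ContinuousOn (dTh S.uz) V := hcd hu2 _
  have c3 : ContinuousOn (dZ fun q => dZ S.Ath q / S.Az q) V := hcd hq1 _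
  have c4 : ContinuousOn (dTh fun q => dTh S.Az q / S.Ath q) V := hcd hq2 _
  have c5 : ContinuousOn
      (fun p => dZ S.Ath p * dTh S.Az p / (S.Ath p * S.Az p) * (S.uth p * S.uz p)) V :=
    ((hq1.continuousOn.mul hq2.continuousOn).mul (cu1.mul cu2)).congr fun p _ => by
      simp only [Pi.mul_apply]; ring
  have c6 : ContinuousOn (dZ fun q => dZ S.Ath q / S.Az q * S.uth q ^ 2) V :=
    hcd (hq1.mul (hu1.pow 2)) _
  have c7 : ContinuousOn (dTh fun q => dTh S.Az q / S.Ath q * S.uz q ^ 2) V :=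
    hcd (hq2.mul (hu2.pow 2)) _
  rw [Setup2D.ip, integral_congr_ae (ae_restrict_of_ae_restrict_of_subset
    (subset_closure.trans hEV) (ae_restrict_of_forall_mem hV.measurableSet hpt)),
    integral_sub (hint (by fun_prop)) (hint (by fun_prop)), integral_const_mul,
    integral_add (hint c6) (hint c7),
    integral_add (hint (by fun_prop)) (hint (by fun_prop)),
    integral_add (hint (by fun_prop)) (hint (by fun_prop)),
    integral_add (hint (by fun_prop)) (hint c5), integral_const_mul, integral_const_mul]

end Setup2D

theorem ibp_identity_offdiag (S : Setup2D) (hBase : S.Base) (hC2 : S.Csq) (hB0 : S.BZero) :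
    S.ip S.F23 S.F32 =
      (∫ p in S.E, dZ S.uth p * dTh S.uz p) +
      (∫ p in S.E, dZ S.Ath p * dTh S.Az p / (S.Ath p * S.Az p) * (S.uth p * S.uz p)) +
      (1 / 2) * (∫ p in S.E, dZ (fun q => dZ S.Ath q / S.Az q) p * S.uth p ^ 2) +
      (1 / 2) * (∫ p in S.E, dTh (fun q => dTh S.Az q / S.Ath q) p * S.uz p ^ 2) := by
  obtain ⟨hz, -, -, -, -, hpos, -, -, -⟩ := hBase
  obtain ⟨hAth, hAz, -, huth, huz⟩ := hC2
  set V : Set (ℝ × ℝ) := {p | 0 < S.Ath p ∧ 0 < S.Az p}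
  have hV : IsOpen V :=
    (isOpen_lt continuous_const hAth.continuous).inter (isOpen_lt continuous_const hAz.continuous)
  have hEV : closure S.E ⊆ V := hpos
  have hE : Bornology.IsBounded S.E := S.isBounded_E_s8 fun θ hθ =>
    ⟨(hz θ (Ioo_subset_Icc_self hθ)).1, (hz θ (Ioo_subset_Icc_self hθ)).2.2⟩
  have hq1 : ContDiffOn ℝ 1 (fun q => dZ S.Ath q / S.Az q) V :=
    (hAth.contDiffOn_fderiv_apply_div (hAz.of_le one_le_two) _).mono fun _ hp => hp.2.ne'
  have hq2 : ContDiffOn ℝ 1 (fun q => dTh S.Az q / S.Ath q) V :=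
    (hAz.contDiffOn_fderiv_apply_div (hAth.of_le one_le_two) _).mono fun _ hp => hp.1.ne'
  have hu1 : ContDiffOn ℝ 1 S.uth V := (huth.of_le one_le_two).contDiffOn
  have hu2 : ContDiffOn ℝ 1 S.uz V := (huz.of_le one_le_two).contDiffOn
  have hdiv1 : ∫ p in S.E, dZ (fun q => dZ S.Ath q / S.Az q * S.uth q ^ 2) p = 0 :=
    setIntegral_fderiv_mul_sq_eq_zero volume hE hV hEV hq1 hu1 (fun p hp => (hB0 p hp).2.1) _
  have hdiv2 : ∫ p in S.E, dTh (fun q => dTh S.Az q / S.Ath q * S.uz q ^ 2) p = 0 :=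
    setIntegral_fderiv_mul_sq_eq_zero volume hE hV hEV hq2 hu2 (fun p hp => (hB0 p hp).2.2) _
  rw [S.ip_F23_F32_eq_sub_divergence hV (fun p hp => ⟨hp.1.ne', hp.2.ne'⟩) hE hEV hq1 hq2 hu1 hu2,
    hdiv1, hdiv2]
  ring
end
end

section
/- (Combined identity via the Codazzi–Gauss equation.) Assume additionally A_θ, A_z ∈ C²(closure of E), u ∈ C²(closure of E; ℝ³), u = 0 on ∂E, and that the Codazzi–Gauss identity ∂_z(A_{θ,z}/A_z) + ∂_θ(A_{z,θ}/A_θ) = −A_z A_θ κ_z κ_θ holds on E. Then (F₂₂ − κ_θ u_t, F₃₃ − κ_z u_t)_E − (F₂₃, F₃₂)_E = (1/2) ∫_E A_θ A_z κ_θ κ_z (u_θ² + u_z²) dθdz. -/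
open MeasureTheory Set Real

noncomputable section

namespace CodazziAux

open MeasureTheory Set Real Filter Topology Setup2D

section calc_lemmas
variable {f g : ℝ × ℝ → ℝ} {p : ℝ × ℝ}

lemma dTh_add (hf : DifferentiableAt ℝ f p) (hg : DifferentiableAt ℝ g p) :
    dTh (fun q => f q + g q) p = dTh f p + dTh g p := by
  unfold dTh; rw [fderiv_fun_add hf hg]; rfl

lemma dZ_add (hf : DifferentiableAt ℝ f p) (hg : DifferentiableAt ℝ g p) :
    dZ (fun q => f q + g q) p = dZ f p + dZ g p := by
  unfold dZ; rw [fderiv_fun_add hf hg]; rfl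

lemma dTh_mul (hf : DifferentiableAt ℝ f p) (hg : DifferentiableAt ℝ g p) :
    dTh (fun q => f q * g q) p = dTh f p * g p + f p * dTh g p := by
  unfold dTh; rw [fderiv_fun_mul hf hg]; simp; ring

lemma dZ_mul (hf : DifferentiableAt ℝ f p) (hg : DifferentiableAt ℝ g p) :
    dZ (fun q => f q * g q) p = dZ f p * g p + f p * dZ g p := by
  unfold dZ; rw [fderiv_fun_mul hf hg]; simp; ring

lemma dTh_neg : dTh (fun q => -(f q)) p = -(dTh f p) := by
  unfold dTh; rw [fderiv_fun_neg]; rfl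

lemma dZ_neg : dZ (fun q => -(f q)) p = -(dZ f p) := by
  unfold dZ; rw [fderiv_fun_neg]; rfl

lemma dTh_const (c : ℝ) : dTh (fun _ => c) p = 0 := by
  unfold dTh; rw [fderiv_fun_const]; rfl

lemma dZ_const (c : ℝ) : dZ (fun _ => c) p = 0 := by
  unfold dZ; rw [fderiv_fun_const]; rfl

lemma diff_dZ {uz : ℝ × ℝ → ℝ} (h : ContDiff ℝ 2 uz) :
    ContDiff ℝ 1 (fun q => dZ uz q) :=
  (h.fderiv_right (le_refl _)).clm_apply contDiff_const

lemma diff_dTh {uz : ℝ × ℝ → ℝ} (h : ContDiff ℝ 2 uz) :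
    ContDiff ℝ 1 (fun q => dTh uz q) :=
  (h.fderiv_right (le_refl _)).clm_apply contDiff_const

lemma dTh_dZ_comm {uz : ℝ × ℝ → ℝ} (h : ContDiff ℝ 2 uz) (p : ℝ × ℝ) :
    dTh (fun q => dZ uz q) p = dZ (fun q => dTh uz q) p := by
  have hd1 : ContDiff ℝ 1 (fderiv ℝ uz) := h.fderiv_right (le_refl _)
  have hdiff : DifferentiableAt ℝ (fderiv ℝ uz) p := hd1.differentiable one_ne_zero p
  have hsymm := second_derivative_symmetric (f := uz) (f' := fderiv ℝ uz)
      (f'' := fderiv ℝ (fderiv ℝ uz) p) (x := p)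
      (fun y => ((h.differentiable (by norm_num)) y).hasFDerivAt) hdiff.hasFDerivAt
  have h1 : dTh (fun q => dZ uz q) p = (fderiv ℝ (fderiv ℝ uz) p (1,0)) (0,1) := by
    unfold dTh dZ
    rw [fderiv_clm_apply hdiff (differentiableAt_const _)]
    simp
  have h2 : dZ (fun q => dTh uz q) p = (fderiv ℝ (fderiv ℝ uz) p (0,1)) (1,0) := by
    unfold dTh dZ
    rw [fderiv_clm_apply hdiff (differentiableAt_const _)]
    simp
  rw [h1, h2, hsymm]

end calc_lemmas

/-- auxiliary scalar field `g = (u_θ² + u_z²)/2` -/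
def gFun (S : Setup2D) : ℝ × ℝ → ℝ := fun q => (S.uth q * S.uth q + S.uz q * S.uz q) * (1/2)

/-- the flux component in the θ-direction -/
def Pf (S : Setup2D) : ℝ × ℝ → ℝ :=
  fun q => S.uth q * dZ S.uz q + dTh S.Az q / S.Ath q * gFun S q

/-- the flux component in the z-direction -/
def Qf (S : Setup2D) : ℝ × ℝ → ℝ :=
  fun q => -(S.uth q * dTh S.uz q) + dZ S.Ath q / S.Az q * gFun S q

lemma key_pointwise (S : Setup2D) (hAth : ContDiff ℝ 2 S.Ath) (hAz : ContDiff ℝ 2 S.Az)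
    (huth : ContDiff ℝ 2 S.uth) (huz : ContDiff ℝ 2 S.uz) (p : ℝ × ℝ)
    (ha : S.Ath p ≠ 0) (hb : S.Az p ≠ 0)
    (hCGp : dZ (fun q => dZ S.Ath q / S.Az q) p + dTh (fun q => dTh S.Az q / S.Ath q) p =
      -(S.Az p * S.Ath p * S.kz p * S.kth p)) :
    S.Ath p * S.Az p * (S.F22 p - S.kth p * S.ut p) * (S.F33 p - S.kz p * S.ut p) -
      S.Ath p * S.Az p * S.F23 p * S.F32 p -
      (1/2) * (S.Ath p * S.Az p * S.kth p * S.kz p * (S.uth p ^ 2 + S.uz p ^ 2)) =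
    dTh (Pf S) p + dZ (Qf S) p := by
  have h1 : (1:ℕ) ≤ 2 := by norm_num
  have hduth : DifferentiableAt ℝ S.uth p := (huth.differentiable (by norm_num)) p
  have hduz : DifferentiableAt ℝ S.uz p := (huz.differentiable (by norm_num)) p
  have hddZuz : DifferentiableAt ℝ (fun q => dZ S.uz q) p :=
    ((diff_dZ huz).differentiable one_ne_zero) p
  have hddThuz : DifferentiableAt ℝ (fun q => dTh S.uz q) p :=
    ((diff_dTh huz).differentiable one_ne_zero) p
  have hddThAz : DifferentiableAt ℝ (fun q => dTh S.Az q) p :=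
    ((diff_dTh hAz).differentiable one_ne_zero) p
  have hddZAth : DifferentiableAt ℝ (fun q => dZ S.Ath q) p :=
    ((diff_dZ hAth).differentiable one_ne_zero) p
  have hdAth : DifferentiableAt ℝ S.Ath p := (hAth.differentiable (by norm_num)) p
  have hdAz : DifferentiableAt ℝ S.Az p := (hAz.differentiable (by norm_num)) p
  have hdg : DifferentiableAt ℝ (gFun S) p := by
    unfold gFun
    exact (((hduth.mul hduth).add (hduz.mul hduz)).mul (differentiableAt_const _))
  have hdq1 : DifferentiableAt ℝ (fun q => dTh S.Az q / S.Ath q) p := by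
    simp only [div_eq_mul_inv]; exact hddThAz.mul (hdAth.inv ha)
  have hdq2 : DifferentiableAt ℝ (fun q => dZ S.Ath q / S.Az q) p := by
    simp only [div_eq_mul_inv]; exact hddZAth.mul (hdAz.inv hb)
  -- expand dTh (Pf S) p
  have hP : dTh (Pf S) p =
      dTh S.uth p * dZ S.uz p + S.uth p * dTh (fun q => dZ S.uz q) p +
      (dTh (fun q => dTh S.Az q / S.Ath q) p * gFun S p +
        dTh S.Az p / S.Ath p * dTh (gFun S) p) := by
    unfold Pf
    rw [dTh_add (hduth.fun_mul hddZuz) (hdq1.fun_mul hdg), dTh_mul hduth hddZuz, dTh_mul hdq1 hdg]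
  have hQ : dZ (Qf S) p =
      -(dZ S.uth p * dTh S.uz p + S.uth p * dZ (fun q => dTh S.uz q) p) +
      (dZ (fun q => dZ S.Ath q / S.Az q) p * gFun S p +
        dZ S.Ath p / S.Az p * dZ (gFun S) p) := by
    unfold Qf
    rw [dZ_add ((hduth.fun_mul hddThuz).fun_neg) (hdq2.fun_mul hdg), dZ_neg, dZ_mul hduth hddThuz,
      dZ_mul hdq2 hdg]
  have hgTh : dTh (gFun S) p =
      (dTh S.uth p * S.uth p + S.uth p * dTh S.uth p +
        (dTh S.uz p * S.uz p + S.uz p * dTh S.uz p)) * (1/2) := by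
    unfold gFun
    rw [dTh_mul ((hduth.fun_mul hduth).fun_add (hduz.fun_mul hduz)) (differentiableAt_const _),
      dTh_add (hduth.fun_mul hduth) (hduz.fun_mul hduz), dTh_mul hduth hduth, dTh_mul hduz hduz,
      dTh_const]
    ring
  have hgZ : dZ (gFun S) p =
      (dZ S.uth p * S.uth p + S.uth p * dZ S.uth p +
        (dZ S.uz p * S.uz p + S.uz p * dZ S.uz p)) * (1/2) := by
    unfold gFun
    rw [dZ_mul ((hduth.fun_mul hduth).fun_add (hduz.fun_mul hduz)) (differentiableAt_const _),
      dZ_add (hduth.fun_mul hduth) (hduz.fun_mul hduz), dZ_mul hduth hduth, dZ_mul hduz hduz,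
      dZ_const]
    ring
  have hcomm := dTh_dZ_comm huz p
  have hCTh : dTh (fun q => dTh S.Az q / S.Ath q) p =
      -(S.Az p * S.Ath p * S.kz p * S.kth p) - dZ (fun q => dZ S.Ath q / S.Az q) p := by
    linarith [hCGp]
  rw [hP, hQ, hgTh, hgZ, hcomm, hCTh]
  simp only [Setup2D.F22, Setup2D.F23, Setup2D.F32, Setup2D.F33, gFun]
  field_simp
  ring

end CodazziAux
namespace CodazziAux
open MeasureTheory Set Real Filter Topology

lemma deriv_zero_of_accPt {f : ℝ → ℝ} {t : Set ℝ} (h0 : ∀ y ∈ t, f y = 0) {x : ℝ}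
    (hx : x ∈ t) (hacc : AccPt x (𝓟 t)) {d : ℝ} (hd : HasDerivAt f d x) : d = 0 := by
  have hne : (𝓝[≠] x ⊓ 𝓟 t).NeBot := hacc
  have h1 : Tendsto (slope f x) (𝓝[≠] x ⊓ 𝓟 t) (𝓝 d) :=
    (hasDerivAt_iff_tendsto_slope.1 hd).mono_left inf_le_left
  have h2 : Tendsto (slope f x) (𝓝[≠] x ⊓ 𝓟 t) (𝓝 0) := by
    have hev : ∀ᶠ y in 𝓝[≠] x ⊓ 𝓟 t, slope f x y = 0 := by
      have ht : ∀ᶠ y in 𝓝[≠] x ⊓ 𝓟 t, y ∈ t :=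
        Filter.le_principal_iff.mp inf_le_right
      filter_upwards [ht] with y hy
      simp [slope_def_field, h0 y hy, h0 x hx]
    exact Tendsto.congr' (hev.mono fun y hy => hy.symm) tendsto_const_nhds
  exact tendsto_nhds_unique h1 h2

lemma countable_nonacc (t : Set ℝ) : {x | x ∈ t ∧ ¬ AccPt x (𝓟 t)}.Countable := by
  have hsub : {x | x ∈ t ∧ ¬ AccPt x (𝓟 t)} ⊆
      ⋃ q : ℚ × ℚ, {x | x ∈ t ∩ Ioo (q.1 : ℝ) (q.2 : ℝ) ∧ t ∩ Ioo (q.1 : ℝ) (q.2 : ℝ) ⊆ {x}} := by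
    rintro x ⟨hxt, hxn⟩
    have hbot : 𝓝[t \ {x}] x = ⊥ := by
      rw [diff_eq, inter_comm, nhdsWithin_inter']
      exact Filter.not_neBot.mp hxn
    have hnc : x ∉ closure (t \ {x}) := by
      intro h
      exact (mem_closure_iff_nhdsWithin_neBot.mp h).ne hbot
    rw [Metric.mem_closure_iff] at hnc
    push_neg at hnc
    obtain ⟨ε, hε, hsep⟩ := hnc
    obtain ⟨q1, hq1, hq1'⟩ := exists_rat_btwn (show x - ε < x by linarith)
    obtain ⟨q2, hq2, hq2'⟩ := exists_rat_btwn (show x < x + ε by linarith)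
    refine mem_iUnion.2 ⟨(q1, q2), ⟨⟨hxt, hq1', hq2⟩, ?_⟩⟩
    rintro y ⟨hyt, hy1, hy2⟩
    by_contra hyx
    have hsep' := hsep y ⟨hyt, by simpa using hyx⟩
    rw [Real.dist_eq] at hsep'
    have habs : |x - y| < ε := abs_sub_lt_iff.mpr ⟨by linarith, by linarith⟩
    linarith
  refine Set.Countable.mono hsub (Set.countable_iUnion fun q => ?_)
  refine Set.Subsingleton.countable fun a ha b hb => ?_
  have := ha.2 hb.1
  have h2 := ha.2 ha.1
  simp only [mem_singleton_iff] at this h2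
  rw [this]

lemma open_ordConnected_eq_Ioo {C : Set ℝ} (hC : IsOpen C) (hne : C.Nonempty)
    (hbb : BddBelow C) (hba : BddAbove C) (hconn : C.OrdConnected) :
    C = Ioo (sInf C) (sSup C) := by
  apply Subset.antisymm
  · intro x hx
    obtain ⟨ε, hε, hball⟩ := Metric.isOpen_iff.mp hC x hx
    have hx1 : x - ε/2 ∈ C := by
      apply hball
      rw [Metric.mem_ball, Real.dist_eq, show x - ε/2 - x = -(ε/2) by ring, abs_neg,
        abs_of_pos (by linarith)]
      linarith
    have hx2 : x + ε/2 ∈ C := by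
      apply hball
      rw [Metric.mem_ball, Real.dist_eq, show x + ε/2 - x = ε/2 by ring,
        abs_of_pos (by linarith)]
      linarith
    exact ⟨lt_of_le_of_lt (csInf_le hbb hx1) (by linarith),
      lt_of_lt_of_le (by linarith : x < x + ε/2) (le_csSup hba hx2)⟩
  · intro y hy
    obtain ⟨a, ha, hay⟩ := exists_lt_of_csInf_lt hne hy.1
    obtain ⟨b, hb2, hyb⟩ := exists_lt_of_lt_csSup hne hy.2
    exact hconn.out ha hb2 ⟨le_of_lt hay, le_of_lt hyb⟩

lemma ftc_open {U O : Set ℝ} (hU : IsOpen U) (hUb : U ⊆ Ioo 0 1) (hO : IsOpen O)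
    (hUO : closure U ⊆ O) {f f' : ℝ → ℝ}
    (hd : ∀ x ∈ O, HasDerivAt f (f' x) x) (hc : ContinuousOn f' O)
    (h0 : ∀ x ∈ frontier U, f x = 0) : ∫ x in U, f' x = 0 := by
  classical
  have hclU : closure U ⊆ Icc 0 1 := by
    have := closure_mono hUb
    rwa [closure_Ioo (by norm_num : (0:ℝ) ≠ 1)] at this
  have hcompU : IsCompact (closure U) :=
    IsCompact.of_isClosed_subset isCompact_Icc isClosed_closure hclU
  have hint : IntegrableOn f' U volume :=
    (ContinuousOn.integrableOn_compact hcompU (hc.mono hUO)).mono_set subset_closure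
  set 𝒞 : Set (Set ℝ) := (fun x => connectedComponentIn U x) '' U with h𝒞
  have hCopen : ∀ C ∈ 𝒞, IsOpen C := by rintro C ⟨x, hx, rfl⟩; exact hU.connectedComponentIn
  have hCne : ∀ C ∈ 𝒞, C.Nonempty := by
    rintro C ⟨x, hx, rfl⟩; exact ⟨x, mem_connectedComponentIn hx⟩
  have hCsub : ∀ C ∈ 𝒞, C ⊆ U := by rintro C ⟨x, hx, rfl⟩; exact connectedComponentIn_subset U x
  have hcount : 𝒞.Countable := by
    have hrange : 𝒞 ⊆ range (fun q : ℚ => connectedComponentIn U (q : ℝ)) := by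
      rintro C ⟨x, hx, rfl⟩
      obtain ⟨y, hymem, hy⟩ := Dense.exists_mem_open (Rat.denseRange_cast (𝕜 := ℝ))
        hU.connectedComponentIn ⟨x, mem_connectedComponentIn hx⟩
      obtain ⟨q, rfl⟩ := hymem
      exact ⟨q, (connectedComponentIn_eq hy).symm⟩
    exact (countable_range _).mono hrange
  have hUeq : U = ⋃₀ 𝒞 := by
    apply Subset.antisymm
    · intro x hx
      exact ⟨connectedComponentIn U x, ⟨x, hx, rfl⟩, mem_connectedComponentIn hx⟩
    · exact sUnion_subset fun C hC => hCsub C hC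
  haveI : Countable ↥𝒞 := hcount.to_subtype
  have hdisj : Pairwise (Function.onFun Disjoint fun C : ↥𝒞 => (C : Set ℝ)) := by
    rintro ⟨C, hC⟩ ⟨C', hC'⟩ hne
    obtain ⟨x, hx, rfl⟩ := hC
    obtain ⟨x', hx', rfl⟩ := hC'
    refine disjoint_left.mpr fun {z} hz hz' => ?_
    apply hne
    apply Subtype.ext
    simp only
    rw [connectedComponentIn_eq hz, connectedComponentIn_eq hz']
  have hmeas : ∀ C : ↥𝒞, MeasurableSet (C : Set ℝ) := fun C => (hCopen _ C.2).measurableSet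
  have hinteq : ∫ x in U, f' x = ∑' C : ↥𝒞, ∫ x in (C : Set ℝ), f' x := by
    rw [hUeq, sUnion_eq_iUnion]
    exact integral_iUnion hmeas hdisj (by rw [← sUnion_eq_iUnion, ← hUeq]; exact hint)
  rw [hinteq]
  have hzero : ∀ C : ↥𝒞, ∫ x in (C : Set ℝ), f' x = 0 := by
    rintro ⟨C, hC⟩
    simp only
    have hCo := hCopen C hC
    have hCn := hCne C hC
    have hCu := hCsub C hC
    have hbb : BddBelow C := (bddBelow_Ioo : BddBelow (Ioo (0:ℝ) 1)).mono (hCu.trans hUb)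
    have hba : BddAbove C := (bddAbove_Ioo : BddAbove (Ioo (0:ℝ) 1)).mono (hCu.trans hUb)
    have hconn : C.OrdConnected := by
      obtain ⟨x, hx, rfl⟩ := hC
      exact isPreconnected_connectedComponentIn.ordConnected
    set a := sInf C
    set b := sSup C
    have hIoo : C = Ioo a b := open_ordConnected_eq_Ioo hCo hCn hbb hba hconn
    have hab : a < b := by
      obtain ⟨z, hz⟩ := hCn
      rw [hIoo] at hz
      exact lt_trans hz.1 hz.2
    have hclC : closure C = Icc a b := by rw [hIoo, closure_Ioo hab.ne]
    have hIccO : Icc a b ⊆ O := by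
      rw [← hclC]
      exact (closure_mono hCu).trans hUO
    -- endpoints are in the frontier of U
    have hend : ∀ e, e ∈ Icc a b → e ∉ Ioo a b → e ∈ frontier U := by
      intro e heIcc heIoo
      rw [hU.frontier_eq]
      constructor
      · exact closure_mono hCu (hclC ▸ heIcc)
      · intro heU
        obtain ⟨l, u, helu, hluC⟩ := mem_nhds_iff_exists_Ioo_subset.mp
          ((hU.connectedComponentIn).mem_nhds (mem_connectedComponentIn heU))
        -- pick a point in C ∩ connectedComponentIn U e
        have hew : ∃ w, w ∈ Ioo a b ∧ w ∈ Ioo l u := by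
          rcases heIcc.1.lt_or_eq with h1 | h1
          · rcases heIcc.2.lt_or_eq with h2 | h2
            · exact absurd ⟨h1, h2⟩ heIoo
            · -- e = b
              have hlb : l < b := by rw [← h2]; exact helu.1
              have hbu : b < u := by rw [← h2]; exact helu.2
              have hmb : max a l < b := max_lt hab hlb
              refine ⟨(max a l + b) / 2, ⟨?_, ?_⟩, ?_, ?_⟩
              · linarith [le_max_left a l]
              · linarith
              · linarith [le_max_right a l]
              · linarith
          · -- e = a
            have hla : l < a := by rw [h1]; exact helu.1
            have hau : a < u := by rw [h1]; exact helu.2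
            have ham : a < min b u := lt_min hab hau
            refine ⟨(a + min b u) / 2, ⟨?_, ?_⟩, ?_, ?_⟩
            · linarith
            · linarith [min_le_left b u]
            · linarith
            · linarith [min_le_right b u]
        obtain ⟨w, hwC, hwlu⟩ := hew
        have hwC' : w ∈ C := hIoo ▸ hwC
        have hwcc : w ∈ connectedComponentIn U e := hluC hwlu
        have : C = connectedComponentIn U e := by
          obtain ⟨x, hx, rfl⟩ := hC
          show connectedComponentIn U x = connectedComponentIn U e
          rw [connectedComponentIn_eq hwC', ← connectedComponentIn_eq hwcc]
        have heC : e ∈ C := this ▸ mem_connectedComponentIn heU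
        rw [hIoo] at heC
        exact heIoo heC
    have hfa : f a = 0 := h0 a (hend a ⟨le_refl a, hab.le⟩ (by simp))
    have hfb : f b = 0 := h0 b (hend b ⟨hab.le, le_refl b⟩ (by simp))
    rw [hIoo, ← integral_Ioc_eq_integral_Ioo, ← intervalIntegral.integral_of_le hab.le]
    rw [intervalIntegral.integral_eq_sub_of_hasDerivAt
      (fun x hx => hd x (hIccO ((uIcc_of_le hab.le) ▸ hx)))
      ((hc.mono hIccO).intervalIntegrable_of_Icc hab.le)]
    rw [hfa, hfb, sub_zero]
  simp only [hzero]
  exact tsum_zero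

end CodazziAux
namespace CodazziAux
open MeasureTheory Set Real Filter Topology

/-- slicing derivative: z-direction -/
lemma hasDerivAt_slice2 {f : ℝ × ℝ → ℝ} {x y : ℝ} (hf : DifferentiableAt ℝ f (x, y)) :
    HasDerivAt (fun t => f (x, t)) (fderiv ℝ f (x, y) (0, 1)) y := by
  have hcurve : HasDerivAt (fun t : ℝ => ((x : ℝ), t)) ((0 : ℝ), (1 : ℝ)) y :=
    HasDerivAt.prodMk (hasDerivAt_const y x) (hasDerivAt_id y)
  exact hf.hasFDerivAt.comp_hasDerivAt y hcurve

lemma hasDerivAt_slice1 {f : ℝ × ℝ → ℝ} {x y : ℝ} (hf : DifferentiableAt ℝ f (x, y)) :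
    HasDerivAt (fun t => f (t, y)) (fderiv ℝ f (x, y) (1, 0)) x := by
  have hcurve : HasDerivAt (fun t : ℝ => (t, (y : ℝ))) ((1 : ℝ), (0 : ℝ)) x :=
    HasDerivAt.prodMk (hasDerivAt_id x) (hasDerivAt_const x y)
  exact hf.hasFDerivAt.comp_hasDerivAt x hcurve

/-- the swap continuous linear map -/
def swapL : ℝ × ℝ →L[ℝ] ℝ × ℝ := (ContinuousLinearEquiv.prodComm ℝ ℝ ℝ : (ℝ × ℝ) ≃L[ℝ] ℝ × ℝ)

lemma fderiv_swap_apply {f : ℝ × ℝ → ℝ} (hf : Differentiable ℝ f) (q : ℝ × ℝ) (v : ℝ × ℝ) :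
    fderiv ℝ (fun r : ℝ × ℝ => f (r.2, r.1)) q v = fderiv ℝ f (q.2, q.1) (v.2, v.1) := by
  have hsw : HasFDerivAt (fun r : ℝ × ℝ => (r.2, r.1)) swapL q := swapL.hasFDerivAt
  have hcomp : HasFDerivAt (fun r : ℝ × ℝ => f (r.2, r.1))
      ((fderiv ℝ f (q.2, q.1)).comp swapL) q :=
    HasFDerivAt.comp q (hf (q.2, q.1)).hasFDerivAt hsw
  rw [hcomp.fderiv]
  rfl

/-- a.e. vanishing of both partial derivatives on a measurable zero set -/
lemma ae_partials_zero {f : ℝ × ℝ → ℝ} (hf : Differentiable ℝ f) {s : Set (ℝ × ℝ)}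
    (hs : MeasurableSet s) (h0 : ∀ p ∈ s, f p = 0) :
    ∀ᵐ p ∂(volume.restrict s), fderiv ℝ f p (1, 0) = 0 ∧ fderiv ℝ f p (0, 1) = 0 := by
  -- the z-direction bad set for arbitrary data
  have key : ∀ (g : ℝ × ℝ → ℝ), Differentiable ℝ g → ∀ (t : Set (ℝ × ℝ)), MeasurableSet t →
      (∀ p ∈ t, g p = 0) → volume (t ∩ {p | fderiv ℝ g p (0, 1) ≠ 0}) = 0 := by
    intro g hg t ht hg0
    have hm : Measurable fun p : ℝ × ℝ => fderiv ℝ g p (0, 1) :=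
      measurable_fderiv_apply_const ℝ g _
    have hBm : MeasurableSet (t ∩ {p | fderiv ℝ g p (0, 1) ≠ 0}) :=
      ht.inter (hm (measurableSet_singleton 0).compl)
    rw [Measure.volume_eq_prod, Measure.measure_prod_null hBm]
    refine Filter.Eventually.of_forall fun x => ?_
    have hsub : Prod.mk x ⁻¹' (t ∩ {p | fderiv ℝ g p (0, 1) ≠ 0}) ⊆
        {y | y ∈ {y : ℝ | (x, y) ∈ t} ∧ ¬ AccPt y (𝓟 {y : ℝ | (x, y) ∈ t})} := by
      rintro y ⟨hyt, hy0⟩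
      refine ⟨hyt, fun hacc => hy0 ?_⟩
      exact deriv_zero_of_accPt (fun u hu => hg0 (x, u) hu) hyt hacc
        (hasDerivAt_slice2 (hg (x, y)))
    exact measure_mono_null hsub ((countable_nonacc _).measure_zero _)
  have hB2 : volume (s ∩ {p | fderiv ℝ f p (0, 1) ≠ 0}) = 0 := key f hf s hs h0
  -- the θ-direction via swapping
  have hB1 : volume (s ∩ {p | fderiv ℝ f p (1, 0) ≠ 0}) = 0 := by
    set F : ℝ × ℝ → ℝ := fun r => f (r.2, r.1) with hF
    have hFd : Differentiable ℝ F := hf.comp (differentiable_snd.prodMk differentiable_fst)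
    have hs' : MeasurableSet (Prod.swap ⁻¹' s) := measurable_swap hs
    have h0' : ∀ p ∈ Prod.swap ⁻¹' s, F p = 0 := fun p hp => h0 _ hp
    have hkey := key F hFd (Prod.swap ⁻¹' s) hs' h0'
    have hset : s ∩ {p | fderiv ℝ f p (1, 0) ≠ 0} =
        Prod.swap ⁻¹' ((Prod.swap ⁻¹' s) ∩ {p | fderiv ℝ F p (0, 1) ≠ 0}) := by
      ext p
      simp only [mem_inter_iff, mem_preimage, mem_setOf_eq, Prod.fst_swap, Prod.snd_swap]
      constructor
      · rintro ⟨hps, hpd⟩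
        refine ⟨hps, ?_⟩
        rw [fderiv_swap_apply hf (Prod.swap p) ((0 : ℝ), (1 : ℝ))]
        simpa using hpd
      · rintro ⟨hps, hpd⟩
        refine ⟨hps, ?_⟩
        rw [fderiv_swap_apply hf (Prod.swap p) ((0 : ℝ), (1 : ℝ))] at hpd
        simpa using hpd
    rw [hset]
    have hBm' : MeasurableSet ((Prod.swap ⁻¹' s) ∩ {p | fderiv ℝ F p (0, 1) ≠ 0}) :=
      hs'.inter ((measurable_fderiv_apply_const ℝ F _) (measurableSet_singleton 0).compl)
    rw [Measure.volume_eq_prod]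
    rw [(Measure.measurePreserving_swap (μ := (volume : Measure ℝ)) (ν := (volume : Measure ℝ))).measure_preimage hBm'.nullMeasurableSet]
    rw [Measure.volume_eq_prod] at hkey
    exact hkey
  have hnull : volume ((s ∩ {p | fderiv ℝ f p (1, 0) ≠ 0}) ∪
      (s ∩ {p | fderiv ℝ f p (0, 1) ≠ 0})) = 0 := measure_union_null hB1 hB2
  rw [ae_restrict_iff' hs, ae_iff]
  refine measure_mono_null (fun p hp => ?_) hnull
  simp only [mem_setOf_eq, not_forall] at hp
  obtain ⟨hps, hpd⟩ := hp
  rw [not_and_or] at hpd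
  rcases hpd with h | h
  · exact Or.inl ⟨hps, h⟩
  · exact Or.inr ⟨hps, h⟩

end CodazziAux
namespace CodazziAux
open MeasureTheory Set Real Filter Topology

lemma closure_subset_box {W : Set (ℝ × ℝ)}
    (hWb : W ⊆ Ioo (0:ℝ) 1 ×ˢ Ioo (0:ℝ) 1) :
    closure W ⊆ Icc (0:ℝ) 1 ×ˢ Icc (0:ℝ) 1 := by
  have h := closure_mono hWb
  refine h.trans ?_
  rw [closure_prod_eq, closure_Ioo (by norm_num : (0:ℝ) ≠ 1)]

lemma isCompact_closure_box {W : Set (ℝ × ℝ)}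
    (hWb : W ⊆ Ioo (0:ℝ) 1 ×ˢ Ioo (0:ℝ) 1) : IsCompact (closure W) :=
  IsCompact.of_isClosed_subset (isCompact_Icc.prod isCompact_Icc) isClosed_closure
    (closure_subset_box hWb)

lemma integral_dZ_zero {W O : Set (ℝ × ℝ)} (hW : IsOpen W)
    (hWb : W ⊆ Ioo (0:ℝ) 1 ×ˢ Ioo (0:ℝ) 1) (hO : IsOpen O) (hWO : closure W ⊆ O)
    {P : ℝ × ℝ → ℝ} (hP : ContDiffOn ℝ 1 P O) (h0 : ∀ p ∈ frontier W, P p = 0) :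
    ∫ p in W, fderiv ℝ P p (0, 1) = 0 := by
  set h : ℝ × ℝ → ℝ := fun p => fderiv ℝ P p (0, 1) with hh
  have hdiffat : ∀ p ∈ O, DifferentiableAt ℝ P p := fun p hp =>
    (hP.differentiableOn one_ne_zero).differentiableAt (hO.mem_nhds hp)
  have hfdercont : ContinuousOn (fderiv ℝ P) O :=
    hP.continuousOn_fderiv_of_isOpen hO le_rfl
  have hhcont : ContinuousOn h O := by
    exact (ContinuousLinearMap.apply ℝ ℝ ((0:ℝ),(1:ℝ))).continuous.comp_continuousOn hfdercont
  have hint : IntegrableOn h W volume :=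
    (ContinuousOn.integrableOn_compact (isCompact_closure_box hWb)
      (hhcont.mono hWO)).mono_set subset_closure
  have hindint : Integrable (W.indicator h) volume :=
    (integrable_indicator_iff hW.measurableSet).mpr hint
  rw [← integral_indicator hW.measurableSet]
  rw [Measure.volume_eq_prod] at hindint ⊢
  rw [MeasureTheory.integral_prod _ hindint]
  have hinner : ∀ x : ℝ, (∫ y : ℝ, W.indicator h (x, y)) = 0 := by
    intro x
    have hslice : (fun y : ℝ => W.indicator h (x, y)) =
        ({y : ℝ | (x, y) ∈ W}.indicator fun y => h (x, y)) := by
      funext y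
      by_cases hy : (x, y) ∈ W <;> simp [indicator, hy]
    have hsliceopen : IsOpen {y : ℝ | (x, y) ∈ W} :=
      hW.preimage (Continuous.prodMk_right x)
    rw [hslice, integral_indicator hsliceopen.measurableSet]
    -- apply ftc_open
    have hcont2 : Continuous (fun y : ℝ => ((x:ℝ), y)) := Continuous.prodMk_right x
    refine ftc_open hsliceopen ?_ (hO.preimage hcont2) ?_
      (f := fun y => P (x, y)) (f' := fun y => h (x, y)) ?_ ?_ ?_
    · intro y hy
      exact (hWb hy).2
    · intro y hy
      exact hWO (hcont2.closure_preimage_subset W hy)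
    · intro y hy
      exact hasDerivAt_slice2 (hdiffat (x, y) hy)
    · exact hhcont.comp hcont2.continuousOn fun y hy => hy
    · intro y hy
      apply h0
      rw [hW.frontier_eq]
      rw [hsliceopen.frontier_eq] at hy
      exact ⟨hcont2.closure_preimage_subset W hy.1, hy.2⟩
  simp only [hinner]
  exact integral_zero _ _

lemma integral_dTh_zero {W O : Set (ℝ × ℝ)} (hW : IsOpen W)
    (hWb : W ⊆ Ioo (0:ℝ) 1 ×ˢ Ioo (0:ℝ) 1) (hO : IsOpen O) (hWO : closure W ⊆ O)
    {P : ℝ × ℝ → ℝ} (hP : ContDiffOn ℝ 1 P O) (h0 : ∀ p ∈ frontier W, P p = 0) :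
    ∫ p in W, fderiv ℝ P p (1, 0) = 0 := by
  have hswapm : MeasurableEmbedding (Prod.swap : ℝ × ℝ → ℝ × ℝ) :=
    MeasurableEquiv.prodComm.measurableEmbedding
  have hpres : MeasurePreserving (Prod.swap : ℝ × ℝ → ℝ × ℝ)
      ((volume : Measure ℝ).prod volume) ((volume : Measure ℝ).prod volume) :=
    Measure.measurePreserving_swap
  set P' : ℝ × ℝ → ℝ := fun r => P (r.2, r.1) with hP'
  set W' : Set (ℝ × ℝ) := Prod.swap ⁻¹' W with hW'
  set O' : Set (ℝ × ℝ) := Prod.swap ⁻¹' O with hO'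
  have hswapc : Continuous (Prod.swap : ℝ × ℝ → ℝ × ℝ) := continuous_swap
  have hhomeo : W' = (Homeomorph.prodComm ℝ ℝ) ⁻¹' W := rfl
  have hWfront : frontier W' = Prod.swap ⁻¹' frontier W := by
    rw [hhomeo, ← Homeomorph.preimage_frontier]
    rfl
  have hPdiff : Differentiable ℝ P → True := fun _ => trivial
  -- P is only ContDiffOn O; extend the swap-fderiv identity locally
  have hswapCD : ContDiff ℝ 1 (fun r : ℝ × ℝ => ((r.2 : ℝ), (r.1 : ℝ))) :=
    contDiff_snd.prodMk contDiff_fst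
  have hP'cd : ContDiffOn ℝ 1 P' O' := by
    refine hP.comp hswapCD.contDiffOn ?_
    intro r hr
    exact hr
  have hkey : ∫ p in W', fderiv ℝ P' p (0, 1) = 0 := by
    refine integral_dZ_zero (hW.preimage hswapc) ?_ (hO.preimage hswapc) ?_ hP'cd ?_
    · intro r hr
      have := hWb hr
      exact ⟨this.2, this.1⟩
    · intro r hr
      rw [show closure W' = (Homeomorph.prodComm ℝ ℝ) ⁻¹' closure W from by
        rw [hhomeo, (Homeomorph.prodComm ℝ ℝ).preimage_closure]] at hr
      exact hWO hr
    · intro r hr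
      rw [hWfront] at hr
      exact h0 _ hr
  -- identify the two integrals
  have hsetint : ∫ p in W, fderiv ℝ P p (1, 0) =
      ∫ r in W', fderiv ℝ P (Prod.swap r) (1, 0) := by
    rw [Measure.volume_eq_prod]
    exact (hpres.setIntegral_preimage_emb hswapm (fun p => fderiv ℝ P p (1, 0)) W).symm
  rw [hsetint]
  refine Eq.trans ?_ hkey
  apply setIntegral_congr_fun (hW.preimage hswapc).measurableSet
  intro r hr
  have hrO : (r.2, r.1) ∈ O := hWO (subset_closure (show Prod.swap r ∈ W from hr))
  -- fderiv of P' at r in terms of fderiv of P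
  have hsw : HasFDerivAt (fun q : ℝ × ℝ => (q.2, q.1)) swapL r := swapL.hasFDerivAt
  have hcomp : HasFDerivAt P' ((fderiv ℝ P (r.2, r.1)).comp swapL) r :=
    HasFDerivAt.comp r ((hP.differentiableOn one_ne_zero).differentiableAt
      (hO.mem_nhds hrO)).hasFDerivAt hsw
  show fderiv ℝ P (Prod.swap r) (1, 0) = fderiv ℝ P' r (0, 1)
  rw [hcomp.fderiv]
  rfl

end CodazziAux
open CodazziAux

theorem combined_codazzi_identity (S : Setup2D) (hBase : S.Base) (hC2 : S.Csq)
    (hB0 : S.BZero) (hCG : S.CodazziGauss) :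
    S.ip (fun p => S.F22 p - S.kth p * S.ut p) (fun p => S.F33 p - S.kz p * S.ut p) -
        S.ip S.F23 S.F32 =
      (1 / 2) *
        ∫ p in S.E, S.Ath p * S.Az p * S.kth p * S.kz p * (S.uth p ^ 2 + S.uz p ^ 2) := by
  classical
  obtain ⟨hz, hAth1, hAz1, hkth1, hkz1, hpos, hut1, huth1, huz1⟩ := hBase
  obtain ⟨hAth2, hAz2, hut2, huth2, huz2⟩ := hC2
  -- the open set of positivity
  set U : Set (ℝ × ℝ) := {p | 0 < S.Ath p ∧ 0 < S.Az p} with hUdef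
  have hUopen : IsOpen U := by
    have h1 : IsOpen {p : ℝ × ℝ | 0 < S.Ath p} := isOpen_lt continuous_const hAth1.continuous
    have h2 : IsOpen {p : ℝ × ℝ | 0 < S.Az p} := isOpen_lt continuous_const hAz1.continuous
    exact (h1.inter h2 : _)
  have hclEU : closure S.E ⊆ U := fun p hp => hpos p hp
  have hEbox : S.E ⊆ Ioo (0:ℝ) 1 ×ˢ Ioo (0:ℝ) 1 := by
    rintro ⟨θ, z⟩ ⟨hθ, hzz⟩
    obtain ⟨h1, h2, h3⟩ := hz θ ⟨hθ.1.le, hθ.2.le⟩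
    exact ⟨hθ, lt_of_le_of_lt h1 hzz.1, lt_of_lt_of_le hzz.2 h3⟩
  -- measurable hull of E
  set M : Set (ℝ × ℝ) := toMeasurable volume S.E ∩ closure S.E with hMdef
  have hMmeas : MeasurableSet M :=
    (measurableSet_toMeasurable _ _).inter isClosed_closure.measurableSet
  have hEM : S.E ⊆ M := fun p hp => ⟨subset_toMeasurable _ _ hp, subset_closure hp⟩
  have hMcl : M ⊆ closure S.E := inter_subset_right
  have hrestrict : volume.restrict S.E = volume.restrict M := by
    refine MeasureTheory.Measure.ext fun t ht => ?_
    rw [Measure.restrict_apply ht, Measure.restrict_apply ht]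
    apply le_antisymm
    · exact measure_mono (inter_subset_inter_right t hEM)
    · calc volume (t ∩ M) ≤ volume (t ∩ toMeasurable volume S.E) :=
            measure_mono (fun p hp => ⟨hp.1, hp.2.1⟩)
        _ = volume (t ∩ S.E) := by
            rw [inter_comm t, Measure.measure_toMeasurable_inter_of_sFinite ht, inter_comm]
  -- the interior
  set W : Set (ℝ × ℝ) := interior S.E with hWdef
  have hWopen : IsOpen W := isOpen_interior
  have hWE : W ⊆ S.E := interior_subset
  have hWM : W ⊆ M := fun p hp => hEM (hWE hp)
  have hWbox : W ⊆ Ioo (0:ℝ) 1 ×ˢ Ioo (0:ℝ) 1 := hWE.trans hEbox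
  have hMWfront : M \ W ⊆ frontier S.E := fun p hp => ⟨hMcl hp.1, hp.2⟩
  have hWfront : frontier W ⊆ frontier S.E := by
    intro p hp
    refine ⟨?_, ?_⟩
    · exact (closure_mono interior_subset) hp.1
    · intro hint
      have : p ∈ interior W := by rw [hWdef, interior_interior]; exact hint
      exact hp.2 this
  have hclWU : closure W ⊆ U := (closure_mono interior_subset).trans hclEU
  -- integrands
  set I1 : ℝ × ℝ → ℝ := fun p =>
    S.Ath p * S.Az p * (S.F22 p - S.kth p * S.ut p) * (S.F33 p - S.kz p * S.ut p) with hI1def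
  set I2 : ℝ × ℝ → ℝ := fun p => S.Ath p * S.Az p * S.F23 p * S.F32 p with hI2def
  set R2 : ℝ × ℝ → ℝ := fun p =>
    S.Ath p * S.Az p * S.kth p * S.kz p * (S.uth p ^ 2 + S.uz p ^ 2) with hR2def
  -- continuity of the integrands on U
  have hcTh_uth : Continuous fun p => dTh S.uth p := (diff_dTh huth2).continuous
  have hcZ_uth : Continuous fun p => dZ S.uth p := (diff_dZ huth2).continuous
  have hcTh_uz : Continuous fun p => dTh S.uz p := (diff_dTh huz2).continuous
  have hcZ_uz : Continuous fun p => dZ S.uz p := (diff_dZ huz2).continuous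
  have hcTh_Az : Continuous fun p => dTh S.Az p := (diff_dTh hAz2).continuous
  have hcZ_Ath : Continuous fun p => dZ S.Ath p := (diff_dZ hAth2).continuous
  have hdenom : ∀ p ∈ U, S.Az p * S.Ath p ≠ 0 := fun p hp => (mul_pos hp.2 hp.1).ne'
  have hcdenom : ContinuousOn (fun p => S.Az p * S.Ath p) U :=
    (hAz1.continuous.mul hAth1.continuous).continuousOn
  have hcF22 : ContinuousOn S.F22 U := by
    refine ContinuousOn.div ?_ hcdenom hdenom
    exact (((hAz1.continuous.mul hcTh_uth).add
      ((((hAz1.continuous.mul hAth1.continuous).mul hkth1.continuous)).mul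
        hut1.continuous)).add (hcZ_Ath.mul huz1.continuous)).continuousOn
  have hcF33 : ContinuousOn S.F33 U := by
    refine ContinuousOn.div ?_ hcdenom hdenom
    exact (((hAth1.continuous.mul hcZ_uz).add
      ((((hAz1.continuous.mul hAth1.continuous).mul hkz1.continuous)).mul
        hut1.continuous)).add (hcTh_Az.mul huth1.continuous)).continuousOn
  have hcF23 : ContinuousOn S.F23 U := by
    refine ContinuousOn.div ?_ hcdenom hdenom
    exact ((hAth1.continuous.mul hcZ_uth).sub (hcTh_Az.mul huz1.continuous)).continuousOn
  have hcF32 : ContinuousOn S.F32 U := by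
    refine ContinuousOn.div ?_ hcdenom hdenom
    exact ((hAz1.continuous.mul hcTh_uz).sub (hcZ_Ath.mul huth1.continuous)).continuousOn
  have hcI1 : ContinuousOn I1 U := by
    refine ContinuousOn.mul (ContinuousOn.mul (ContinuousOn.mul ?_ ?_) ?_) ?_
    · exact hAth1.continuous.continuousOn
    · exact hAz1.continuous.continuousOn
    · exact hcF22.sub (hkth1.continuous.mul hut1.continuous).continuousOn
    · exact hcF33.sub (hkz1.continuous.mul hut1.continuous).continuousOn
  have hcI2 : ContinuousOn I2 U :=
    ((((hAth1.continuous.mul hAz1.continuous).continuousOn).mul hcF23).mul hcF32)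
  have hcR2 : ContinuousOn R2 U := by
    exact ((((hAth1.continuous.mul hAz1.continuous).mul hkth1.continuous).mul
      hkz1.continuous).mul ((huth1.continuous.pow 2).add (huz1.continuous.pow 2))).continuousOn
  -- integrability over M, W, M \ W
  have hcompE : IsCompact (closure S.E) := isCompact_closure_box hEbox
  have hIntCl : ∀ (f : ℝ × ℝ → ℝ), ContinuousOn f U → IntegrableOn f (closure S.E) volume :=
    fun f hf => ContinuousOn.integrableOn_compact hcompE (hf.mono hclEU)
  have hIntM : ∀ (f : ℝ × ℝ → ℝ), ContinuousOn f U → IntegrableOn f M volume :=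
    fun f hf => (hIntCl f hf).mono_set hMcl
  have hIntW : ∀ (f : ℝ × ℝ → ℝ), ContinuousOn f U → IntegrableOn f W volume :=
    fun f hf => (hIntCl f hf).mono_set (hWE.trans subset_closure)
  have hIntMW : ∀ (f : ℝ × ℝ → ℝ), ContinuousOn f U → IntegrableOn f (M \ W) volume :=
    fun f hf => (hIntCl f hf).mono_set (diff_subset.trans hMcl)
  -- splitting of integrals over M
  have hsplit : ∀ (f : ℝ × ℝ → ℝ), ContinuousOn f U →
      ∫ p in M, f p = (∫ p in W, f p) + ∫ p in M \ W, f p := by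
    intro f hf
    rw [← MeasureTheory.setIntegral_union disjoint_sdiff_self_right
      (hMmeas.diff hWopen.measurableSet) (hIntW f hf) (hIntMW f hf),
      union_diff_cancel hWM]
  -- a.e. vanishing on the frontier part
  have haefr : ∀ᵐ p ∂(volume.restrict (M \ W)),
      I1 p = 0 ∧ I2 p = 0 ∧ R2 p = 0 := by
    have hfrm : MeasurableSet (frontier S.E) := isClosed_frontier.measurableSet
    have h1 := ae_partials_zero (huth2.differentiable (by norm_num)) hfrm
      (fun p hp => (hB0 p hp).2.1)
    have h2 := ae_partials_zero (huz2.differentiable (by norm_num)) hfrm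
      (fun p hp => (hB0 p hp).2.2)
    have hmono : volume.restrict (M \ W) ≤ volume.restrict (frontier S.E) :=
      Measure.restrict_mono hMWfront le_rfl
    have h1' := (MeasureTheory.ae_mono hmono) h1
    have h2' := (MeasureTheory.ae_mono hmono) h2
    have hmem := MeasureTheory.ae_restrict_mem (μ := (volume : Measure (ℝ × ℝ))) (hMmeas.diff hWopen.measurableSet)
    filter_upwards [h1', h2', hmem] with p hp1 hp2 hpm
    have hpf : p ∈ frontier S.E := hMWfront hpm
    obtain ⟨hut0, huth0, huz0⟩ := hB0 p hpf
    have hTh_uth : dTh S.uth p = 0 := hp1.1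
    have hZ_uth : dZ S.uth p = 0 := hp1.2
    have hTh_uz : dTh S.uz p = 0 := hp2.1
    have hZ_uz : dZ S.uz p = 0 := hp2.2
    refine ⟨?_, ?_, ?_⟩
    · simp [hI1def, Setup2D.F22, hut0, huz0, hTh_uth]
    · simp [hI2def, Setup2D.F23, Setup2D.F32, huz0, huth0, hZ_uth, hTh_uz]
    · simp [hR2def, huth0, huz0]
  have hzero1 : ∫ p in M \ W, I1 p = 0 :=
    MeasureTheory.integral_eq_zero_of_ae (haefr.mono fun p hp => hp.1)
  have hzero2 : ∫ p in M \ W, I2 p = 0 :=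
    MeasureTheory.integral_eq_zero_of_ae (haefr.mono fun p hp => hp.2.1)
  have hzeroR : ∫ p in M \ W, R2 p = 0 :=
    MeasureTheory.integral_eq_zero_of_ae (haefr.mono fun p hp => hp.2.2)
  -- the divergence part on W
  have hgFuncd : ContDiff ℝ 1 (gFun S) :=
    (((huth1.mul huth1).add (huz1.mul huz1)).mul contDiff_const)
  have hPcd : ContDiffOn ℝ 1 (Pf S) U := by
    refine ContDiffOn.add ?_ ?_
    · exact ((huth1.mul (diff_dZ huz2)).contDiffOn)
    · refine ContDiffOn.mul (ContDiffOn.div (diff_dTh hAz2).contDiffOn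
        (hAth1.contDiffOn) (fun p hp => hp.1.ne')) hgFuncd.contDiffOn
  have hQcd : ContDiffOn ℝ 1 (Qf S) U := by
    refine ContDiffOn.add ?_ ?_
    · exact ((huth1.mul (diff_dTh huz2)).neg.contDiffOn)
    · refine ContDiffOn.mul (ContDiffOn.div (diff_dZ hAth2).contDiffOn
        (hAz1.contDiffOn) (fun p hp => hp.2.ne')) hgFuncd.contDiffOn
  have hPfr : ∀ p ∈ frontier W, Pf S p = 0 := by
    intro p hp
    obtain ⟨hut0, huth0, huz0⟩ := hB0 p (hWfront hp)
    simp [Pf, gFun, huth0, huz0]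
  have hQfr : ∀ p ∈ frontier W, Qf S p = 0 := by
    intro p hp
    obtain ⟨hut0, huth0, huz0⟩ := hB0 p (hWfront hp)
    simp [Qf, gFun, huth0, huz0]
  have hPint : ∫ p in W, dTh (Pf S) p = 0 :=
    integral_dTh_zero hWopen hWbox hUopen hclWU hPcd hPfr
  have hQint : ∫ p in W, dZ (Qf S) p = 0 :=
    integral_dZ_zero hWopen hWbox hUopen hclWU hQcd hQfr
  have hcThP : ContinuousOn (fun p => dTh (Pf S) p) U := by
    exact (ContinuousLinearMap.apply ℝ ℝ ((1:ℝ),(0:ℝ))).continuous.comp_continuousOn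
      (hPcd.continuousOn_fderiv_of_isOpen hUopen le_rfl)
  have hcZQ : ContinuousOn (fun p => dZ (Qf S) p) U := by
    exact (ContinuousLinearMap.apply ℝ ℝ ((0:ℝ),(1:ℝ))).continuous.comp_continuousOn
      (hQcd.continuousOn_fderiv_of_isOpen hUopen le_rfl)
  have hWid : ∫ p in W, (I1 p - I2 p - (1/2) * R2 p) = 0 := by
    have hcongr : ∀ p ∈ W, I1 p - I2 p - (1/2) * R2 p = dTh (Pf S) p + dZ (Qf S) p := by
      intro p hp
      have hpU : p ∈ U := hclEU (subset_closure (hWE hp))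
      exact key_pointwise S hAth2 hAz2 huth2 huz2 p hpU.1.ne' hpU.2.ne' (hCG p (hWE hp))
    rw [MeasureTheory.setIntegral_congr_fun hWopen.measurableSet hcongr,
      MeasureTheory.integral_add (hIntW _ hcThP) (hIntW _ hcZQ), hPint, hQint, add_zero]
  -- assemble everything
  have hIW : ∫ p in W, (I1 p - I2 p - (1/2) * R2 p) =
      (∫ p in W, I1 p) - (∫ p in W, I2 p) - (1/2) * ∫ p in W, R2 p := by
    have h1 : MeasureTheory.Integrable (fun p => I1 p - I2 p) (volume.restrict W) :=
      MeasureTheory.Integrable.sub (hIntW _ hcI1) (hIntW _ hcI2)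
    have h2 : MeasureTheory.Integrable (fun p => (1/2 : ℝ) * R2 p) (volume.restrict W) :=
      (hIntW _ hcR2).const_mul _
    rw [MeasureTheory.integral_sub h1 h2,
      MeasureTheory.integral_sub (hIntW _ hcI1) (hIntW _ hcI2),
      MeasureTheory.integral_const_mul]
  show (∫ p in S.E, S.Ath p * S.Az p * (S.F22 p - S.kth p * S.ut p) *
      (S.F33 p - S.kz p * S.ut p)) - (∫ p in S.E, S.Ath p * S.Az p * S.F23 p * S.F32 p) =
      (1/2) * ∫ p in S.E, S.Ath p * S.Az p * S.kth p * S.kz p * (S.uth p ^ 2 + S.uz p ^ 2)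
  rw [hrestrict]
  have e1 : ∫ p in M, S.Ath p * S.Az p * (S.F22 p - S.kth p * S.ut p) *
      (S.F33 p - S.kz p * S.ut p) = (∫ p in W, I1 p) + ∫ p in M \ W, I1 p := hsplit I1 hcI1
  have e2 : ∫ p in M, S.Ath p * S.Az p * S.F23 p * S.F32 p =
      (∫ p in W, I2 p) + ∫ p in M \ W, I2 p := hsplit I2 hcI2
  have e3 : ∫ p in M, S.Ath p * S.Az p * S.kth p * S.kz p * (S.uth p ^ 2 + S.uz p ^ 2) =
      (∫ p in W, R2 p) + ∫ p in M \ W, R2 p := hsplit R2 hcR2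
  rw [e1, e2, e3, hzero1, hzero2, hzeroR]
  rw [hWid] at hIW
  linarith [hIW]
end
end

section
/- (Bound (4.17) on u_z via Poincaré in the z direction.) Assume u = 0 on ∂E, the uniform bounds 0 < a ≤ A_θ, A_z ≤ A and |∇A_θ| + |∇A_z| ≤ B, that κ_θ, κ_z ≥ 0, and that κ_z ≤ c√K_G on E where K_G = κ_θ κ_z, for some c > 0. Let L = sup_θ (z₂(θ) − z₁(θ)). Then there exists a constant C > 0, depending only on a, A, B, c, such that ‖u_z‖²_{L²(E)} ≤ C L² ( ‖|F^sym|‖²_{L²(E)} + ‖√K_G u_t‖²_{L²(E)} + ‖u_θ‖²_{L²(E)} ). -/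
open MeasureTheory Set Real

noncomputable section

/-!
Writing out `F₃₃` gives `∂_z u_z = A_z F₃₃ - A_z κ_z u_t - (A_{z,θ} / A_θ) u_θ`, and with
`κ_z ≤ c √K_G` each of the three terms is bounded pointwise by the right-hand side integrand.
On every vertical segment `{θ} × (z₁ θ, z₂ θ)` the function `u_z` vanishes at the lower end, so
the fundamental theorem of calculus and Cauchy–Schwarz give the one-dimensional Poincaré
inequality `∫ u_z² ≤ L² ∫ (∂_z u_z)²` there; Fubini integrates it over `θ`.
-/

theorem sq_setIntegral_le_measureReal_mul {α : Type*} [MeasurableSpace α] {μ : Measure α}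
    {s : Set α} (hs : μ s ≠ ⊤) {f : α → ℝ} (hf : IntegrableOn f s μ)
    (hf2 : IntegrableOn (fun x => f x ^ 2) s μ) :
    (∫ x in s, f x ∂μ) ^ 2 ≤ μ.real s * ∫ x in s, f x ^ 2 ∂μ := by
  rcases eq_or_ne (μ s) 0 with h0 | h0
  · simp [Measure.restrict_eq_zero.2 h0]
  have hpos : 0 < μ.real s := ENNReal.toReal_pos h0 hs
  have jensen := (even_two.convexOn_pow (𝕜 := ℝ)).map_set_average_le (continuousOn_pow 2)
    isClosed_univ h0 hs (by simp) hf hf2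
  rw [setAverage_eq, setAverage_eq, smul_eq_mul, smul_eq_mul, mul_pow, inv_pow, sq (μ.real s),
    mul_inv, mul_assoc] at jensen
  rw [← inv_mul_le_iff₀ hpos]
  exact (mul_le_mul_iff_right₀ (inv_pos.2 hpos)).1 jensen

theorem setIntegral_mono_on_of_subset {α : Type*} [MeasurableSpace α] {μ : Measure α}
    {s t : Set α} (ht : MeasurableSet t) (hst : s ⊆ t) {f g : α → ℝ}
    (hf : IntegrableOn f t μ) (hg : IntegrableOn g t μ) (hfg : ∀ x ∈ t, f x ≤ g x) :
    ∫ x in s, f x ∂μ ≤ ∫ x in s, g x ∂μ :=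
  integral_mono_ae (hf.mono_set hst) (hg.mono_set hst)
    (ae_restrict_of_ae_restrict_of_subset hst (ae_restrict_of_forall_mem ht hfg))

theorem MeasureTheory.Measure.restrict_toMeasurable_inter {α : Type*} [MeasurableSpace α]
    {μ : Measure α} [SFinite μ] {s t : Set α} (ht : MeasurableSet t) (hst : s ⊆ t) :
    μ.restrict (toMeasurable μ s ∩ t) = μ.restrict s := by
  rw [inter_comm, ← Measure.restrict_restrict ht, Measure.restrict_toMeasurable_of_sFinite,
    Measure.restrict_restrict ht, inter_eq_right.2 hst]

theorem setIntegral_prod_le_mul_of_ae_slice {α β : Type*} [MeasurableSpace α]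
    [MeasurableSpace β] {μ : Measure α} {ν : Measure β} [SFinite μ] [SFinite ν]
    {T : Set (α × β)} (hT : MeasurableSet T) {g h : α × β → ℝ}
    (hg : IntegrableOn g T (μ.prod ν)) (hh : IntegrableOn h T (μ.prod ν)) {K : ℝ}
    (hslice : ∀ᵐ x ∂μ, ∫ y in Prod.mk x ⁻¹' T, g (x, y) ∂ν ≤
      K * ∫ y in Prod.mk x ⁻¹' T, h (x, y) ∂ν) :
    ∫ p in T, g p ∂(μ.prod ν) ≤ K * ∫ p in T, h p ∂(μ.prod ν) := by
  have hslice_eq : ∀ (k : α × β → ℝ) x,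
      ∫ y, T.indicator k (x, y) ∂ν = ∫ y in Prod.mk x ⁻¹' T, k (x, y) ∂ν := fun k x => by
    rw [← integral_indicator (measurable_prodMk_left hT)]; rfl
  rw [← integral_indicator hT, ← integral_indicator hT,
    integral_prod _ ((integrable_indicator_iff hT).2 hg),
    integral_prod _ ((integrable_indicator_iff hT).2 hh), ← integral_const_mul]
  refine integral_mono_ae ((integrable_indicator_iff hT).2 hg).integral_prod_left
    (((integrable_indicator_iff hT).2 hh).integral_prod_left.const_mul K) ?_
  filter_upwards [hslice] with x hx
  simpa only [hslice_eq] using hx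

theorem sq_le_mul_setIntegral_deriv_sq {f f' : ℝ → ℝ} (hf : ∀ t, HasDerivAt f (f' t) t)
    (hf' : Continuous f') {a z : ℝ} (hfa : f a = 0) (haz : a ≤ z) :
    f z ^ 2 ≤ (z - a) * ∫ t in Ioc a z, f' t ^ 2 := by
  have hftc : ∫ t in Ioc a z, f' t = f z := by
    rw [← intervalIntegral.integral_of_le haz,
      intervalIntegral.integral_eq_sub_of_hasDerivAt (fun t _ => hf t)
        (hf'.intervalIntegrable _ _), hfa, sub_zero]
  have := sq_setIntegral_le_measureReal_mul (s := Ioc a z) (measure_Ioc_lt_top (μ := volume)).ne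
    hf'.integrableOn_Ioc (hf'.pow 2).integrableOn_Ioc
  rwa [hftc, Real.volume_real_Ioc_of_le haz] at this

theorem setIntegral_sq_le_of_eq_zero_off_Ioo {f f' : ℝ → ℝ} (hf : ∀ t, HasDerivAt f (f' t) t)
    (hf' : Continuous f') {a b : ℝ} (hab : a ≤ b) (hfa : f a = 0) {s : Set ℝ}
    (hs : MeasurableSet s) (hsub : Ioo a b ⊆ s) (hzero : ∀ z ∈ s \ Ioo a b, f z = 0)
    (hint : IntegrableOn (fun t => f' t ^ 2) s) :
    ∫ z in s, f z ^ 2 ≤ (b - a) ^ 2 * ∫ z in s, f' z ^ 2 := by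
  have hfc : Continuous f := continuous_iff_continuousAt.2 fun t => (hf t).continuousAt
  have hpt : ∀ z ∈ Ioo a b, f z ^ 2 ≤ (b - a) * ∫ t in s, f' t ^ 2 := fun z hz =>
    calc f z ^ 2 ≤ (z - a) * ∫ t in Ioc a z, f' t ^ 2 :=
          sq_le_mul_setIntegral_deriv_sq hf hf' hfa hz.1.le
      _ ≤ (b - a) * ∫ t in s, f' t ^ 2 := by
          refine mul_le_mul (by linarith [hz.2]) ?_
            (setIntegral_nonneg measurableSet_Ioc fun _ _ => sq_nonneg _) (by linarith [hz.1])
          exact setIntegral_mono_set hint (ae_of_all _ fun _ => sq_nonneg _)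
            (Filter.Eventually.of_forall fun t ht => hsub ⟨ht.1, ht.2.trans_lt hz.2⟩)
  calc ∫ z in s, f z ^ 2 = ∫ z in Ioo a b, f z ^ 2 :=
        setIntegral_eq_of_subset_of_forall_sdiff_eq_zero hs hsub fun z hz => by
          simp [hzero z hz]
    _ ≤ ∫ z in Ioo a b, (b - a) * ∫ t in s, f' t ^ 2 :=
        setIntegral_mono_on ((hfc.pow 2).integrableOn_Icc.mono_set Ioo_subset_Icc_self)
          (integrableOn_const measure_Ioo_lt_top.ne) measurableSet_Ioo hpt
    _ = (b - a) ^ 2 * ∫ z in s, f' z ^ 2 := by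
        rw [setIntegral_const, Real.volume_real_Ioo_of_le hab, smul_eq_mul]; ring

theorem continuous_dZ_s12 {f : ℝ × ℝ → ℝ} (hf : ContDiff ℝ 1 f) : Continuous (dZ f) :=
  (hf.continuous_fderiv one_ne_zero).clm_apply continuous_const

theorem continuous_dTh_s12 {f : ℝ × ℝ → ℝ} (hf : ContDiff ℝ 1 f) : Continuous (dTh f) :=
  (hf.continuous_fderiv one_ne_zero).clm_apply continuous_const

theorem hasDerivAt_dZ_s12 {f : ℝ × ℝ → ℝ} (hf : ContDiff ℝ 1 f) (θ z : ℝ) :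
    HasDerivAt (fun t => f (θ, t)) (dZ f (θ, z)) z :=
  (hf.differentiable one_ne_zero (θ, z)).hasFDerivAt.comp_hasDerivAt z
    ((hasDerivAt_const z θ).prodMk (hasDerivAt_id z))

theorem abs_dTh_le (f : ℝ × ℝ → ℝ) (p : ℝ × ℝ) : |dTh f p| ≤ ‖fderiv ℝ f p‖ := by
  simpa [dTh, Prod.norm_def] using (fderiv ℝ f p).le_opNorm (1, 0)

namespace Setup2D

theorem BZero.eq_zero_of_mem_closure_of_notMem {S : Setup2D} (hBZ : S.BZero) {p : ℝ × ℝ}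
    (hp : p ∈ closure S.E) (hpE : p ∉ S.E) : S.ut p = 0 ∧ S.uth p = 0 ∧ S.uz p = 0 :=
  hBZ p ⟨hp, fun h => hpE (interior_subset h)⟩

variable (S : Setup2D)

theorem closure_E_subset_Icc (hB : S.Base) : closure S.E ⊆ Icc 0 1 ×ˢ Icc 0 1 :=
  closure_minimal (fun p ⟨hθ, hz⟩ => by
    obtain ⟨h0, -, h1⟩ := hB.1 p.1 (Ioo_subset_Icc_self hθ)
    exact ⟨Ioo_subset_Icc_self hθ, h0.trans hz.1.le, hz.2.le.trans h1⟩)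
    (isClosed_Icc.prod isClosed_Icc)

theorem isCompact_closure_E (hB : S.Base) : IsCompact (closure S.E) :=
  (isCompact_Icc.prod isCompact_Icc).of_isClosed_subset isClosed_closure
    (S.closure_E_subset_Icc hB)

theorem mk_z1_mem_closure_E {θ : ℝ} (hθ : θ ∈ Ioo 0 1) (h12 : S.z1 θ < S.z2 θ) :
    (θ, S.z1 θ) ∈ closure S.E :=
  map_mem_closure (continuous_const.prodMk continuous_id)
    (by simp [closure_Ioo h12.ne, h12.le]) fun _ hz => ⟨hθ, hz⟩

theorem continuousOn_FsymSq (hB : S.Base) : ContinuousOn S.FsymSq (closure S.E) := by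
  obtain ⟨-, hAth, hAz, hkth, hkz, hpos, hut, huth, huz⟩ := hB
  have := hAth.continuous; have := hAz.continuous; have := hkth.continuous
  have := hkz.continuous; have := hut.continuous; have := huth.continuous
  have := huz.continuous; have := continuous_dZ_s12 hAth; have := continuous_dTh_s12 hAz
  have := continuous_dZ_s12 huth; have := continuous_dTh_s12 huth; have := continuous_dZ_s12 huz
  have := continuous_dTh_s12 huz
  have hden : ∀ p ∈ closure S.E, S.Az p * S.Ath p ≠ 0 := fun p hp =>
    (mul_pos (hpos p hp).2 (hpos p hp).1).ne'
  unfold FsymSq F22 F23sym F23 F32 F33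
  fun_prop (disch := assumption)

theorem integrableOn_E (hB : S.Base) {f : ℝ × ℝ → ℝ} (hf : ContinuousOn f (closure S.E)) :
    IntegrableOn f S.E :=
  (hf.integrableOn_compact (S.isCompact_closure_E hB)).mono_set subset_closure

theorem setIntegral_E_mono (hB : S.Base) {f g : ℝ × ℝ → ℝ} (hf : ContinuousOn f (closure S.E))
    (hg : ContinuousOn g (closure S.E)) (hfg : ∀ p ∈ closure S.E, f p ≤ g p) :
    ∫ p in S.E, f p ≤ ∫ p in S.E, g p :=
  setIntegral_mono_on_of_subset isClosed_closure.measurableSet subset_closure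
    (hf.integrableOn_compact (S.isCompact_closure_E hB))
    (hg.integrableOn_compact (S.isCompact_closure_E hB)) hfg

theorem nF_add_nsq_add_nsq (hB : S.Base) {f g : ℝ × ℝ → ℝ} (hf : ContinuousOn f (closure S.E))
    (hg : ContinuousOn g (closure S.E)) :
    S.nF + S.nsq f + S.nsq g =
      ∫ p in S.E, S.Ath p * S.Az p * (S.FsymSq p + f p ^ 2 + g p ^ 2) := by
  have hw : ContinuousOn (fun p => S.Ath p * S.Az p) (closure S.E) :=
    (hB.2.1.continuous.mul hB.2.2.1.continuous).continuousOn
  have hF : IntegrableOn (fun p => S.Ath p * S.Az p * S.FsymSq p) S.E :=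
    S.integrableOn_E hB (hw.mul (S.continuousOn_FsymSq hB))
  have hf2 : IntegrableOn (fun p => S.Ath p * S.Az p * f p * f p) S.E :=
    S.integrableOn_E hB ((hw.mul hf).mul hf)
  have hg2 : IntegrableOn (fun p => S.Ath p * S.Az p * g p * g p) S.E :=
    S.integrableOn_E hB ((hw.mul hg).mul hg)
  have hFf : IntegrableOn
      (fun p => S.Ath p * S.Az p * S.FsymSq p + S.Ath p * S.Az p * f p * f p) S.E :=
    hF.add hf2
  rw [nF, nsq, nsq, ip, ip, ← integral_add hF hf2, ← integral_add hFf hg2]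
  congr 1 with p; ring

theorem nsq_le_mul_setIntegral_sq {a A B : ℝ} (ha : 0 < a) (hB : S.Base)
    (hBnd : S.Bounds a A B) {f : ℝ × ℝ → ℝ} (hf : Continuous f) :
    S.nsq f ≤ A ^ 2 * ∫ p in S.E, f p ^ 2 := by
  have := hB.2.1.continuous; have := hB.2.2.1.continuous
  rw [← integral_const_mul]
  refine S.setIntegral_E_mono hB (by fun_prop) (by fun_prop) fun p hp => ?_
  obtain ⟨h1, h2, h3, h4, -⟩ := hBnd p hp
  nlinarith [mul_le_mul h2 h4 (ha.le.trans h3) ((ha.le.trans h1).trans h2), sq_nonneg (f p)]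

theorem dZ_uz_eq {p : ℝ × ℝ} (hAth : S.Ath p ≠ 0) (hAz : S.Az p ≠ 0) :
    dZ S.uz p =
      S.Az p * S.F33 p - S.Az p * S.kz p * S.ut p - dTh S.Az p / S.Ath p * S.uth p := by
  rw [F33]; field_simp; ring

theorem sq_dZ_uz_le {a A B c : ℝ} {p : ℝ × ℝ} (ha : 0 < a) (hAth : a ≤ S.Ath p)
    (hAz : a ≤ S.Az p) (hAzA : S.Az p ≤ A) (hdAz : ‖fderiv ℝ S.Az p‖ ≤ B)
    (hkz : (S.kz p * S.ut p) ^ 2 ≤ c ^ 2 * (√(S.kth p * S.kz p) * S.ut p) ^ 2) :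
    a ^ 2 * dZ S.uz p ^ 2 ≤ 3 * (A ^ 2 + A ^ 2 * c ^ 2 + B ^ 2 / a ^ 2) *
      (S.Ath p * S.Az p * (S.FsymSq p + (√(S.kth p * S.kz p) * S.ut p) ^ 2 + S.uth p ^ 2)) := by
  set F := S.FsymSq p
  set U := (√(S.kth p * S.kz p) * S.ut p) ^ 2
  set V := S.uth p ^ 2
  have hAz2 : S.Az p ^ 2 ≤ A ^ 2 := pow_le_pow_left₀ (ha.le.trans hAz) hAzA 2
  have hF33 : S.F33 p ^ 2 ≤ F := by
    simp only [F, FsymSq]; nlinarith [sq_nonneg (S.F22 p), sq_nonneg (S.F23sym p)]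
  have hX : (S.Az p * S.F33 p) ^ 2 ≤ A ^ 2 * F := by
    rw [mul_pow]; exact mul_le_mul hAz2 hF33 (sq_nonneg _) (sq_nonneg _)
  have hY : (S.Az p * S.kz p * S.ut p) ^ 2 ≤ A ^ 2 * c ^ 2 * U := by
    rw [mul_assoc, mul_pow, mul_assoc]; exact mul_le_mul hAz2 hkz (sq_nonneg _) (sq_nonneg _)
  have hZ : (dTh S.Az p / S.Ath p * S.uth p) ^ 2 ≤ B ^ 2 / a ^ 2 * V := by
    have hB2 : dTh S.Az p ^ 2 ≤ B ^ 2 := sq_le_sq' (abs_le.1 ((abs_dTh_le _ _).trans hdAz)).1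
      (abs_le.1 ((abs_dTh_le _ _).trans hdAz)).2
    rw [mul_pow, div_pow]
    gcongr
  have hsum : dZ S.uz p ^ 2 ≤ 3 * (A ^ 2 * F + A ^ 2 * c ^ 2 * U + B ^ 2 / a ^ 2 * V) := by
    rw [S.dZ_uz_eq (ha.trans_le hAth).ne' (ha.trans_le hAz).ne']
    nlinarith [sq_nonneg (S.Az p * S.F33 p + S.Az p * S.kz p * S.ut p),
      sq_nonneg (S.Az p * S.F33 p + dTh S.Az p / S.Ath p * S.uth p),
      sq_nonneg (S.Az p * S.kz p * S.ut p - dTh S.Az p / S.Ath p * S.uth p)]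
  have hcoef : A ^ 2 * F + A ^ 2 * c ^ 2 * U + B ^ 2 / a ^ 2 * V ≤
      (A ^ 2 + A ^ 2 * c ^ 2 + B ^ 2 / a ^ 2) * (F + U + V) := by
    have hF : 0 ≤ F := by simp only [F, FsymSq]; positivity
    have : 0 ≤ A ^ 2 * c ^ 2 := by positivity
    have : 0 ≤ B ^ 2 / a ^ 2 := by positivity
    nlinarith [sq_nonneg A, sq_nonneg (√(S.kth p * S.kz p) * S.ut p), sq_nonneg (S.uth p)]
  have hw : a ^ 2 ≤ S.Ath p * S.Az p := by
    rw [sq]; exact mul_le_mul hAth hAz ha.le (ha.le.trans hAth)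
  calc a ^ 2 * dZ S.uz p ^ 2
      ≤ S.Ath p * S.Az p * (3 * ((A ^ 2 + A ^ 2 * c ^ 2 + B ^ 2 / a ^ 2) * (F + U + V))) :=
        mul_le_mul hw (by linarith) (sq_nonneg _) ((sq_nonneg a).trans hw)
    _ = _ := by ring

theorem setIntegral_dZ_uz_sq_le {a A B c : ℝ} (ha : 0 < a) (hB : S.Base) (hBZ : S.BZero)
    (hBnd : S.Bounds a A B)
    (hcurv : ∀ p ∈ S.E, 0 ≤ S.kth p ∧ 0 ≤ S.kz p ∧ S.kz p ≤ c * √(S.kth p * S.kz p)) :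
    ∫ p in S.E, dZ S.uz p ^ 2 ≤ 3 * (A ^ 2 + A ^ 2 * c ^ 2 + B ^ 2 / a ^ 2) / a ^ 2 *
      (S.nF + S.nsq (fun p => √(S.kth p * S.kz p) * S.ut p) + S.nsq S.uth) := by
  obtain ⟨-, hAth, hAz, hkth, hkz, -, hut, huth, huz⟩ := id hB
  have := hAth.continuous; have := hAz.continuous; have := hkth.continuous
  have := hkz.continuous; have := hut.continuous; have := huth.continuous
  have := continuous_dZ_s12 huz; have := S.continuousOn_FsymSq hB
  rw [S.nF_add_nsq_add_nsq hB (by fun_prop) (by fun_prop), ← integral_const_mul]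
  refine S.setIntegral_E_mono hB (by fun_prop) (by fun_prop) fun p hp => ?_
  obtain ⟨h1, -, h3, h4, h5⟩ := hBnd p hp
  have hkut : (S.kz p * S.ut p) ^ 2 ≤ c ^ 2 * (√(S.kth p * S.kz p) * S.ut p) ^ 2 := by
    by_cases hpE : p ∈ S.E
    · obtain ⟨-, hkz0, hkzc⟩ := hcurv p hpE
      calc (S.kz p * S.ut p) ^ 2 = S.kz p ^ 2 * S.ut p ^ 2 := by ring
        _ ≤ (c * √(S.kth p * S.kz p)) ^ 2 * S.ut p ^ 2 := by gcongr
        _ = _ := by ring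
    · simp [(hBZ.eq_zero_of_mem_closure_of_notMem hp hpE).1]
  rw [div_mul_eq_mul_div, le_div_iff₀ (by positivity), mul_comm]
  exact S.sq_dZ_uz_le ha h1 h3 h4 ((le_add_of_nonneg_left (norm_nonneg _)).trans h5) hkut

/-- `E` need not be measurable, as `z₁, z₂` are arbitrary; the slicing runs on the measurable
hull `T = toMeasurable E ∩ closure E` instead, whose points outside `E` lie on `∂E`. -/
theorem setIntegral_uz_sq_le (hB : S.Base) (hBZ : S.BZero) {L : ℝ}
    (hL : ∀ θ ∈ Ioo (0 : ℝ) 1, S.z2 θ - S.z1 θ ≤ L) :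
    ∫ p in S.E, S.uz p ^ 2 ≤ L ^ 2 * ∫ p in S.E, dZ S.uz p ^ 2 := by
  have huz : ContDiff ℝ 1 S.uz := hB.2.2.2.2.2.2.2.2
  have hK : MeasurableSet (closure S.E) := isClosed_closure.measurableSet
  set T := toMeasurable volume S.E ∩ closure S.E
  have hT : MeasurableSet T := (measurableSet_toMeasurable _ _).inter hK
  have hET : S.E ⊆ T := subset_inter (subset_toMeasurable _ _) subset_closure
  have hTK : T ⊆ closure S.E := inter_subset_right
  have hint : ∀ {f : ℝ × ℝ → ℝ}, Continuous f → IntegrableOn f T :=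
    fun hf => (hf.continuousOn.integrableOn_compact (S.isCompact_closure_E hB)).mono_set hTK
  rw [← Measure.restrict_toMeasurable_inter hK subset_closure, Measure.volume_eq_prod]
  refine setIntegral_prod_le_mul_of_ae_slice hT (hint (f := fun p => S.uz p ^ 2) (by fun_prop))
    (hint (f := fun p => dZ S.uz p ^ 2) ((continuous_dZ_s12 huz).pow 2)) (ae_of_all _ fun θ => ?_)
  have hslice : MeasurableSet (Prod.mk θ ⁻¹' T) := measurable_prodMk_left hT
  have hdZ_slice : Continuous fun z => dZ S.uz (θ, z) :=
    (continuous_dZ_s12 huz).comp (continuous_const.prodMk continuous_id)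
  by_cases hθ : θ ∈ Ioo 0 1
  · obtain ⟨-, h12, -⟩ := hB.1 θ (Ioo_subset_Icc_self hθ)
    have hz1 : S.uz (θ, S.z1 θ) = 0 := (hBZ.eq_zero_of_mem_closure_of_notMem
      (S.mk_z1_mem_closure_E hθ h12) fun h => h.2.1.false).2.2
    calc ∫ z in Prod.mk θ ⁻¹' T, S.uz (θ, z) ^ 2
        ≤ (S.z2 θ - S.z1 θ) ^ 2 * ∫ z in Prod.mk θ ⁻¹' T, dZ S.uz (θ, z) ^ 2 :=
          setIntegral_sq_le_of_eq_zero_off_Ioo (hasDerivAt_dZ_s12 huz θ) hdZ_slice h12.le hz1 hslice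
            (fun z hz => hET ⟨hθ, hz⟩)
            (fun z hz => (hBZ.eq_zero_of_mem_closure_of_notMem (hTK hz.1) fun h => hz.2 h.2).2.2)
            ((hdZ_slice.pow 2).integrableOn_Icc.mono_set fun z hz =>
              (S.closure_E_subset_Icc hB (hTK hz)).2)
      _ ≤ L ^ 2 * ∫ z in Prod.mk θ ⁻¹' T, dZ S.uz (θ, z) ^ 2 := by
          gcongr
          exact hL θ hθ
  · have hzero : ∀ z ∈ Prod.mk θ ⁻¹' T, S.uz (θ, z) ^ 2 = 0 := fun z hz => by
      rw [(hBZ.eq_zero_of_mem_closure_of_notMem (hTK hz) fun h => hθ h.1).2.2, sq, mul_zero]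
    rw [setIntegral_congr_fun hslice hzero, integral_zero]
    exact mul_nonneg (sq_nonneg L) (setIntegral_nonneg hslice fun _ _ => sq_nonneg _)

end Setup2D

theorem bound_uz_poincare_general (a A B c : ℝ) (ha : 0 < a) (hA : 0 < A) :
    ∃ C : ℝ, 0 < C ∧
      ∀ (S : Setup2D) (L : ℝ),
        S.Base → S.BZero → S.Bounds a A B →
        (∀ p ∈ S.E, 0 ≤ S.kth p ∧ 0 ≤ S.kz p ∧
          S.kz p ≤ c * Real.sqrt (S.kth p * S.kz p)) →
        (∀ θ ∈ Ioo (0 : ℝ) 1, S.z2 θ - S.z1 θ ≤ L) →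
        S.nsq S.uz ≤
          C * L ^ 2 * (S.nF + S.nsq (fun p => Real.sqrt (S.kth p * S.kz p) * S.ut p) +
            S.nsq S.uth) := by
  refine ⟨A ^ 2 * (3 * (A ^ 2 + A ^ 2 * c ^ 2 + B ^ 2 / a ^ 2) / a ^ 2), by positivity,
    fun S L hB hBZ hBnd hcurv hL => ?_⟩
  calc S.nsq S.uz ≤ A ^ 2 * ∫ p in S.E, S.uz p ^ 2 :=
        S.nsq_le_mul_setIntegral_sq ha hB hBnd hB.2.2.2.2.2.2.2.2.continuous
    _ ≤ A ^ 2 * (L ^ 2 * ∫ p in S.E, dZ S.uz p ^ 2) := by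
        gcongr; exact S.setIntegral_uz_sq_le hB hBZ hL
    _ ≤ A ^ 2 * (L ^ 2 * (3 * (A ^ 2 + A ^ 2 * c ^ 2 + B ^ 2 / a ^ 2) / a ^ 2 *
          (S.nF + S.nsq (fun p => √(S.kth p * S.kz p) * S.ut p) + S.nsq S.uth))) := by
        gcongr; exact S.setIntegral_dZ_uz_sq_le ha hB hBZ hBnd hcurv
    _ = _ := by ring

theorem bound_uz_poincare (a A B c : ℝ) (ha : 0 < a) (hA : 0 < A) (hB : 0 < B) (hc : 0 < c) :
    ∃ C : ℝ, 0 < C ∧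
      ∀ (S : Setup2D) (L : ℝ),
        S.Base → S.BZero → S.Bounds a A B →
        (∀ p ∈ S.E, 0 ≤ S.kth p ∧ 0 ≤ S.kz p ∧
          S.kz p ≤ c * Real.sqrt (S.kth p * S.kz p)) →
        (∀ θ ∈ Ioo (0 : ℝ) 1, S.z2 θ - S.z1 θ ≤ L) →
        S.nsq S.uz ≤
          C * L ^ 2 * (S.nF + S.nsq (fun p => Real.sqrt (S.kth p * S.kz p) * S.ut p) +
            S.nsq S.uth) :=
  bound_uz_poincare_general a A B c ha hA
end
end
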